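/- arXiv:funct-an/9712010 — 2 statements merged into one kernel-verified Lean document; each statement's English description precedes it below -/
import Mathlib

section
/- Let V be a regular multiplicative unitary, let (δ_A,δ_X,δ_B) be a right-Hilbert bimodule coaction of S_V on _A X_B with associated coaction δ_K on K and nondegenerate homomorphism ψ: A → M(K). Then the homomorphism ψ×Ŝ: A×Ŝ → M(K×Ŝ) is equivariant for the dual coactions δ̂_A and δ̂_K of (Ŝ_V)_p, i.e. ((ψ×Ŝ)⊗id)∘δ̂_A(j_A(a)μ_A(y)) = δ̂_K∘(ψ×Ŝ)(j_A(a)μ_A(y)) for all a ∈ A and y ∈ (Ŝ_V)_p; consequently (δ̂_A, δ̂_X, δ̂_B) together with ψ×Ŝ is a right-Hilbert bimodule coaction of (Ŝ_V)_p on _A X_B × Ŝ. -/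
/-!
Common axiomatic framework for formalizing Kaliszewski–Quigg,
"Equivariance and Imprimitivity for Discrete Hopf C*-Coactions".

Since Mathlib contains neither spatial tensor products of C*-algebras, multiplier
algebras realized abstractly, Hilbert C*-module tensor products, nor crossed
products by Hopf C*-coactions, all of these constructions are axiomatized below as
*realizations*: bundled data satisfying the characteristic algebraic identities of
the corresponding analytic objects.
-/

noncomputable section

open scoped ComplexOrder

/-- A bundled (possibly non-unital) C*-algebra. -/
structure CStarAlg : Type 1 where
  carrier : Type
  [str : NonUnitalCStarAlgebra carrier]

attribute [instance] CStarAlg.str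

instance : CoeSort CStarAlg Type := ⟨CStarAlg.carrier⟩

/-- Morphisms of C*-algebras: non-unital star algebra homomorphisms
(these are automatically norm-decreasing). -/
abbrev CStarHom (A B : CStarAlg) : Type := A.carrier →⋆ₙₐ[ℂ] B.carrier

/-- The ℂ-linear span of a subset of a normed space is topologically dense. -/
def spanDense {X : Type} [NormedAddCommGroup X] [NormedSpace ℂ X] (s : Set X) : Prop :=
  (Submodule.span ℂ s).topologicalClosure = ⊤

/-- Density of the closed span of a subset of a C*-algebra. -/
def DenseSpan {A : CStarAlg} (s : Set A.carrier) : Prop := spanDense s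

/-- A realization of the multiplier algebra `M(A)` of a C*-algebra `A`: a unital
C*-algebra containing `A` as an essential ideal in which every double centralizer
of `A` is implemented. -/
structure Multiplier (A : CStarAlg) : Type 1 where
  M : CStarAlg
  one : M.carrier
  one_mul : ∀ m : M.carrier, one * m = m
  mul_one : ∀ m : M.carrier, m * one = m
  incl : CStarHom A M
  incl_injective : Function.Injective incl
  /-- the left action of a multiplier on the algebra -/
  lmul : M.carrier → A.carrier → A.carrier
  lmul_spec : ∀ m a, incl (lmul m a) = m * incl a
  /-- the right action of a multiplier on the algebra -/
  rmul : A.carrier → M.carrier → A.carrier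
  rmul_spec : ∀ a m, incl (rmul a m) = incl a * m
  essential : ∀ m : M.carrier, (∀ a : A.carrier, m * incl a = 0) → m = 0
  largest : ∀ (L R : A.carrier → A.carrier),
    (∀ a b : A.carrier, L (a * b) = L a * b) →
    (∀ a b : A.carrier, R (a * b) = a * R b) →
    (∀ a b : A.carrier, a * L b = R a * b) →
    ∃ m : M.carrier, ∀ a : A.carrier, incl (L a) = m * incl a ∧ incl (R a) = incl a * m

/-- A nondegenerate homomorphism from `A` to `M(B)`. -/
structure NDHom (A B : CStarAlg) (mB : Multiplier B) : Type where
  toHom : CStarHom A mB.M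
  nondeg : DenseSpan (A := B) {x | ∃ (a : A.carrier) (b : B.carrier), x = mB.lmul (toHom a) b}

/-- A realization of the (spatial) C*-tensor product `A ⊗ B`. -/
structure Tensor (A B : CStarAlg) : Type 1 where
  T : CStarAlg
  tmul : A.carrier → B.carrier → T.carrier
  add_tmul : ∀ a a' b, tmul (a + a') b = tmul a b + tmul a' b
  tmul_add : ∀ a b b', tmul a (b + b') = tmul a b + tmul a b'
  smul_tmul : ∀ (c : ℂ) a b, tmul (c • a) b = c • tmul a b
  tmul_smul : ∀ (c : ℂ) a b, tmul a (c • b) = c • tmul a b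
  tmul_mul : ∀ a a' b b', tmul a b * tmul a' b' = tmul (a * a') (b * b')
  tmul_star : ∀ a b, star (tmul a b) = tmul (star a) (star b)
  dense : DenseSpan (A := T) {x | ∃ a b, x = tmul a b}

/-- A Hopf C*-algebra `(S, δ_S)`: a C*-algebra with a nondegenerate comultiplication
`δ_S : S → M(S ⊗ S)` (coassociativity is suppressed in this axiomatization). -/
structure HopfCStar : Type 1 where
  S : CStarAlg
  SS : Tensor S S
  mSS : Multiplier SS.T
  comul : NDHom S SS.T mSS

/-- A coaction of the Hopf C*-algebra `H` on `A`: a nondegenerate *-homomorphism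
`δ : A → M(A ⊗ S)` such that `δ(a)(1 ⊗ s) ∈ A ⊗ S` (coassociativity is suppressed
in this axiomatization).  The multipliers `1 ⊗ s` and `a ⊗ 1` of `A ⊗ S` are part
of the recorded data. -/
structure Coaction (H : HopfCStar) (A : CStarAlg) : Type 1 where
  AS : Tensor A H.S
  mAS : Multiplier AS.T
  coact : NDHom A AS.T mAS
  /-- the multiplier `1 ⊗ s` of `A ⊗ S` -/
  oneTens : H.S.carrier → mAS.M.carrier
  oneTens_add : ∀ s t, oneTens (s + t) = oneTens s + oneTens t
  oneTens_smul : ∀ (c : ℂ) s, oneTens (c • s) = c • oneTens s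
  oneTens_mul : ∀ s t, oneTens s * oneTens t = oneTens (s * t)
  oneTens_star : ∀ s, star (oneTens s) = oneTens (star s)
  oneTens_tmul : ∀ s a t, oneTens s * mAS.incl (AS.tmul a t) = mAS.incl (AS.tmul a (s * t))
  tmul_oneTens : ∀ s a t, mAS.incl (AS.tmul a t) * oneTens s = mAS.incl (AS.tmul a (t * s))
  /-- the element `δ(a)(1 ⊗ s)` of `A ⊗ S` -/
  lam : A.carrier → H.S.carrier → AS.T.carrier
  lam_spec : ∀ a s, mAS.incl (lam a s) = coact.toHom a * oneTens s
  /-- the multiplier `a ⊗ 1` of `A ⊗ S` -/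
  tensOne : A.carrier → mAS.M.carrier
  tensOne_add : ∀ a b, tensOne (a + b) = tensOne a + tensOne b
  tensOne_mul : ∀ a b, tensOne a * tensOne b = tensOne (a * b)
  tensOne_star : ∀ a, star (tensOne a) = tensOne (star a)
  tensOne_tmul : ∀ a b t, tensOne a * mAS.incl (AS.tmul b t) = mAS.incl (AS.tmul (a * b) t)
  tmul_tensOne : ∀ a b t, mAS.incl (AS.tmul b t) * tensOne a = mAS.incl (AS.tmul (b * a) t)

/-- A coaction is injective if the underlying homomorphism is. -/
def Coaction.Injective {H : HopfCStar} {A : CStarAlg} (d : Coaction H A) : Prop :=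
  Function.Injective d.coact.toHom

/-- A coaction is nondegenerate if `δ(A)(1 ⊗ S)` has dense span in `A ⊗ S`. -/
def Coaction.Nondegenerate {H : HopfCStar} {A : CStarAlg} (d : Coaction H A) : Prop :=
  DenseSpan (A := d.AS.T) {x | ∃ a s, x = d.lam a s}

/-- A coaction is effective if `δ(A)(A ⊗ 1)` has dense span in `A ⊗ S`. -/
def Coaction.Effective {H : HopfCStar} {A : CStarAlg} (d : Coaction H A) : Prop :=
  DenseSpan (A := d.AS.T)
    {x | ∃ a b, d.mAS.incl x = d.coact.toHom a * d.tensOne b}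

/-- The fixed-point set `A^δ = {a : δ(a) = a ⊗ 1}` of a coaction. -/
def Coaction.FixedSet {H : HopfCStar} {A : CStarAlg} (d : Coaction H A) : Set A.carrier :=
  {a | d.coact.toHom a = d.tensOne a}

/-- A nondegenerate homomorphism `ψ : A → M(B)` which is `δ_A – δ_B` equivariant,
i.e. `δ_B ∘ ψ = (ψ ⊗ id) ∘ δ_A`; the map `ψ ⊗ id : A ⊗ S → M(B ⊗ S)` is part of the
recorded data, and equivariance is expressed by testing against `δ_B(B)` and `1 ⊗ S`. -/
structure EquivHom {H : HopfCStar} {A B : CStarAlg} (mB : Multiplier B)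
    (dA : Coaction H A) (dB : Coaction H B) : Type where
  psi : NDHom A B mB
  /-- the homomorphism `ψ ⊗ id : A ⊗ S → M(B ⊗ S)` -/
  psiTens : CStarHom dA.AS.T dB.mAS.M
  psiTens_spec : ∀ a s b t,
    psiTens (dA.AS.tmul a s) * dB.mAS.incl (dB.AS.tmul b t)
      = dB.mAS.incl (dB.AS.tmul (mB.lmul (psi.toHom a) b) (s * t))
  /-- equivariance `δ_B ∘ ψ = (ψ ⊗ id) ∘ δ_A`:
  `δ_B(b ψ(a)) (1 ⊗ s) = δ_B(b) (ψ ⊗ id)(δ_A(a)(1 ⊗ s))` for all `a, b, s`. -/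
  equivariant : ∀ a b s,
    dB.coact.toHom (mB.rmul b (psi.toHom a)) * dB.oneTens s
      = dB.coact.toHom b * psiTens (dA.lam a s)

/-- Abstract data of a regular multiplicative unitary `V` on a Hilbert space `H`,
recorded through its reduced Hopf C*-algebras `S_V` and `Ŝ_V` together with their
faithful representations `L` and `ρ` in the C*-algebra `LH = 𝓛(H)` of bounded
operators (the pentagon identity and regularity are suppressed in this
axiomatization). -/
structure MultUnitary : Type 1 where
  hopfS : HopfCStar
  hopfShat : HopfCStar
  LH : CStarAlg
  oneLH : LH.carrier
  one_mul : ∀ x : LH.carrier, oneLH * x = x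
  mul_one : ∀ x : LH.carrier, x * oneLH = x
  L : CStarHom hopfS.S LH
  L_injective : Function.Injective L
  rho : CStarHom hopfShat.S LH
  rho_injective : Function.Injective rho

/-- A realization of the reduced crossed product `A ×_{δ,r} Ŝ ⊆ 𝓛_A(A ⊗ H)` of a
coaction `δ` of `S` on `A`: the ambient algebra `E = 𝓛_A(A ⊗ H)` is recorded
together with `π_L = (id ⊗ L) ∘ δ` and `y ↦ 1 ⊗ ρ(y)`, and the crossed product is
the closed span of the elements `π_L(a)(1 ⊗ ρ(y))`. -/
structure ReducedCP {H : HopfCStar} (Shat : CStarAlg) {A : CStarAlg}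
    (d : Coaction H A) : Type 1 where
  E : CStarAlg
  oneE : E.carrier
  oneE_mul : ∀ x : E.carrier, oneE * x = x
  mul_oneE : ∀ x : E.carrier, x * oneE = x
  /-- `π_L = (id ⊗ L) ∘ δ` -/
  piL : CStarHom A E
  /-- `y ↦ 1 ⊗ ρ(y)` -/
  rhoE : CStarHom Shat E
  /-- `(id ⊗ L) : A ⊗ S → 𝓛_A(A ⊗ H)`, tying `π_L` to the coaction `δ` -/
  idL : CStarHom d.AS.T E
  piL_spec : ∀ (a : A.carrier) (u : d.AS.T.carrier),
    piL a * idL u = idL (d.mAS.lmul (d.coact.toHom a) u)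
  /-- the reduced crossed product -/
  X : CStarAlg
  iota : CStarHom X E
  iota_injective : Function.Injective iota
  range_eq : Set.range iota
    = closure (Submodule.span ℂ {x : E.carrier | ∃ a y, x = piL a * rhoE y} : Set E.carrier)
  /-- the generator `π_L(a)(1 ⊗ ρ(y))` of the reduced crossed product -/
  gen : A.carrier → Shat.carrier → X.carrier
  gen_spec : ∀ a y, iota (gen a y) = piL a * rhoE y

/-- A realization of the full crossed product `A ×_δ Ŝ` of a coaction `δ` of `S` on
`A`, with the universal covariant pair recorded through `j : A → M(A ×_δ Ŝ)` and
`μ : Ŝ_p → M(A ×_δ Ŝ)` (the covariance identity and the universal property are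
suppressed in this axiomatization). -/
structure FullCP {H : HopfCStar} (Shatp : CStarAlg) {A : CStarAlg}
    (d : Coaction H A) : Type 1 where
  C : CStarAlg
  mC : Multiplier C
  j : NDHom A C mC
  mu : NDHom Shatp C mC
  /-- the element `j(a) μ(y)` of the crossed product -/
  gen : A.carrier → Shatp.carrier → C.carrier
  gen_spec : ∀ a y, mC.incl (gen a y) = j.toHom a * mu.toHom y
  dense : DenseSpan (A := C) {x | ∃ a y, x = gen a y}
/-- A (right) Hilbert C*-module over `B`: a complete normed space with a
`B`-valued inner product and right `B`-action, full over `B`. -/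
structure HilbMod (B : CStarAlg) : Type 1 where
  X : Type
  [grp : NormedAddCommGroup X]
  [mod : NormedSpace ℂ X]
  [cmpl : CompleteSpace X]
  rsmul : X → B.carrier → X
  add_rsmul : ∀ x y b, rsmul (x + y) b = rsmul x b + rsmul y b
  rsmul_add : ∀ x b b', rsmul x (b + b') = rsmul x b + rsmul x b'
  rsmul_mul : ∀ x b b', rsmul (rsmul x b) b' = rsmul x (b * b')
  rsmul_smul : ∀ (c : ℂ) x b, rsmul (c • x) b = c • rsmul x b
  rinner : X → X → B.carrier
  rinner_add_right : ∀ x y z, rinner x (y + z) = rinner x y + rinner x z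
  rinner_smul_right : ∀ (c : ℂ) x y, rinner x (c • y) = c • rinner x y
  rinner_star : ∀ x y, star (rinner x y) = rinner y x
  rinner_rsmul : ∀ x y b, rinner x (rsmul y b) = rinner x y * b
  norm_rinner : ∀ x, ‖x‖ ^ 2 = ‖rinner x x‖
  full : DenseSpan (A := B) {b | ∃ x y, b = rinner x y}

attribute [instance] HilbMod.grp HilbMod.mod HilbMod.cmpl

/-- A right-Hilbert `A – B` bimodule: a full Hilbert `B`-module with a nondegenerate
left action of `A` by adjointable operators (equivalently, an imprimitivity bimodule
`_K X _B` with a nondegenerate homomorphism `A → M(K)`, `K = 𝓚_B(X)`). -/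
structure RightHilbert (A B : CStarAlg) extends HilbMod B : Type 1 where
  act : A.carrier → X → X
  act_add : ∀ a x y, act a (x + y) = act a x + act a y
  act_smul : ∀ (c : ℂ) a x, act a (c • x) = c • act a x
  add_act : ∀ a a' x, act (a + a') x = act a x + act a' x
  act_mul : ∀ a a' x, act (a * a') x = act a (act a' x)
  act_adjoint : ∀ a x y, rinner (act a x) y = rinner x (act (star a) y)
  act_rsmul : ∀ a x b, act a (rsmul x b) = rsmul (act a x) b
  act_nondeg : spanDense {z : X | ∃ a x, z = act a x}

/-- An `A – B` imprimitivity bimodule. -/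
structure Imprim (A B : CStarAlg) extends RightHilbert A B : Type 1 where
  linner : X → X → A.carrier
  linner_add_left : ∀ x y z, linner (x + y) z = linner x z + linner y z
  linner_smul_left : ∀ (c : ℂ) x y, linner (c • x) y = c • linner x y
  linner_star : ∀ x y, star (linner x y) = linner y x
  linner_act : ∀ a x y, linner (act a x) y = a * linner x y
  imprim : ∀ x y z, act (linner x y) z = rsmul x (rinner y z)
  left_full : DenseSpan (A := A) {a | ∃ x y, a = linner x y}

/-- An isomorphism of Hilbert `B`-modules. -/
structure HilbModIso {B : CStarAlg} (X Y : HilbMod B) : Type where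
  toEquiv : X.X ≃ₗ[ℂ] Y.X
  map_rsmul : ∀ x b, toEquiv (X.rsmul x b) = Y.rsmul (toEquiv x) b
  map_rinner : ∀ x y, Y.rinner (toEquiv x) (toEquiv y) = X.rinner x y

/-- An isomorphism of right-Hilbert `A – B` bimodules. -/
structure RHIso {A B : CStarAlg} (X Y : RightHilbert A B) : Type where
  toEquiv : X.X ≃ₗ[ℂ] Y.X
  map_act : ∀ a x, toEquiv (X.act a x) = Y.act a (toEquiv x)
  map_rsmul : ∀ x b, toEquiv (X.rsmul x b) = Y.rsmul (toEquiv x) b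
  map_rinner : ∀ x y, Y.rinner (toEquiv x) (toEquiv y) = X.rinner x y

/-- An isomorphism of `A – B` imprimitivity bimodules. -/
structure ImprimIso {A B : CStarAlg} (X Y : Imprim A B) : Type where
  toEquiv : X.X ≃ₗ[ℂ] Y.X
  map_act : ∀ a x, toEquiv (X.act a x) = Y.act a (toEquiv x)
  map_rsmul : ∀ x b, toEquiv (X.rsmul x b) = Y.rsmul (toEquiv x) b
  map_rinner : ∀ x y, Y.rinner (toEquiv x) (toEquiv y) = X.rinner x y
  map_linner : ∀ x y, Y.linner (toEquiv x) (toEquiv y) = X.linner x y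

/-- A realization of the balanced tensor product `X ⊗_B Y` of right-Hilbert
bimodules `_A X _B` and `_B Y _C`. -/
structure BalTensorR {A B C : CStarAlg} (X : RightHilbert A B) (Y : RightHilbert B C) :
    Type 1 where
  Z : RightHilbert A C
  tmul : X.X → Y.X → Z.X
  add_tmul : ∀ x x' y, tmul (x + x') y = tmul x y + tmul x' y
  tmul_add : ∀ x y y', tmul x (y + y') = tmul x y + tmul x y'
  smul_tmul : ∀ (c : ℂ) x y, tmul (c • x) y = c • tmul x y
  tmul_smul : ∀ (c : ℂ) x y, tmul x (c • y) = c • tmul x y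
  balanced : ∀ x b y, tmul (X.rsmul x b) y = tmul x (Y.act b y)
  act_tmul : ∀ a x y, Z.act a (tmul x y) = tmul (X.act a x) y
  tmul_rsmul : ∀ x y c, Z.rsmul (tmul x y) c = tmul x (Y.rsmul y c)
  rinner_tmul : ∀ x x' y y',
    Z.rinner (tmul x y) (tmul x' y') = Y.rinner y (Y.act (X.rinner x x') y')
  dense : spanDense {z : Z.X | ∃ x y, z = tmul x y}

/-- A realization of the balanced tensor product `X ⊗_B Y` of imprimitivity
bimodules `_A X _B` and `_B Y _C`. -/
structure BalTensorI {A B C : CStarAlg} (X : Imprim A B) (Y : Imprim B C) : Type 1 where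
  Z : Imprim A C
  tmul : X.X → Y.X → Z.X
  add_tmul : ∀ x x' y, tmul (x + x') y = tmul x y + tmul x' y
  tmul_add : ∀ x y y', tmul x (y + y') = tmul x y + tmul x y'
  smul_tmul : ∀ (c : ℂ) x y, tmul (c • x) y = c • tmul x y
  tmul_smul : ∀ (c : ℂ) x y, tmul x (c • y) = c • tmul x y
  balanced : ∀ x b y, tmul (X.rsmul x b) y = tmul x (Y.act b y)
  act_tmul : ∀ a x y, Z.act a (tmul x y) = tmul (X.act a x) y
  tmul_rsmul : ∀ x y c, Z.rsmul (tmul x y) c = tmul x (Y.rsmul y c)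
  rinner_tmul : ∀ x x' y y',
    Z.rinner (tmul x y) (tmul x' y') = Y.rinner y (Y.act (X.rinner x x') y')
  dense : spanDense {z : Z.X | ∃ x y, z = tmul x y}

/-- A realization of the standard right-Hilbert `A – K` bimodule: `K` with its
natural `K – K` imprimitivity bimodule structure, with `A` acting through a
nondegenerate homomorphism `ψ : A → M(K)`. -/
structure StdRHB {A K : CStarAlg} (mK : Multiplier K) (psi : NDHom A K mK) : Type 1 where
  R : RightHilbert A K
  e : K.carrier ≃ₗ[ℂ] R.X
  e_rsmul : ∀ k k', R.rsmul (e k) k' = e (k * k')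
  e_rinner : ∀ k k', R.rinner (e k) (e k') = star k * k'
  e_act : ∀ a k, R.act a (e k) = e (mK.lmul (psi.toHom a) k)

/-- A realization of the standard `K – K` imprimitivity bimodule structure on `K`. -/
structure StdImp (K : CStarAlg) : Type 1 where
  I : Imprim K K
  e : K.carrier ≃ₗ[ℂ] I.X
  e_act : ∀ k k', I.act k (e k') = e (k * k')
  e_rsmul : ∀ k k', I.rsmul (e k) k' = e (k * k')
  e_rinner : ∀ k k', I.rinner (e k) (e k') = star k * k'
  e_linner : ∀ k k', I.linner (e k) (e k') = k * star k'

/-- A realization of the right-Hilbert `A – B` bimodule obtained from an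
imprimitivity bimodule `_K X _B` by letting `A` act on the left through a
nondegenerate homomorphism `ψ : A → M(K)`. -/
structure RHvia {A K B : CStarAlg} (mK : Multiplier K) (psi : NDHom A K mK)
    (X : Imprim K B) : Type 1 where
  R : RightHilbert A B
  e : X.X ≃ₗ[ℂ] R.X
  e_rsmul : ∀ x b, R.rsmul (e x) b = e (X.rsmul x b)
  e_rinner : ∀ x y, R.rinner (e x) (e y) = X.rinner x y
  e_act : ∀ a k x, R.act a (e (X.act k x)) = e (X.act (mK.lmul (psi.toHom a) k) x)
/-- An imprimitivity bimodule coaction `(δ_K, δ_X, δ_B)` of `H` on a `K – B`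
imprimitivity bimodule `X` (Ng's Definition 3.3(a)): the external tensor product
`X ⊗ S` (a `K⊗S – B⊗S` imprimitivity bimodule) is recorded, together with the
elements `δ_X(x)(1 ⊗ s)` and `(1 ⊗ s)δ_X(x)` of `X ⊗ S` and their compatibility
with the coefficient coactions (remaining module compatibilities suppressed). -/
structure IBCoaction (H : HopfCStar) {K B : CStarAlg} (dK : Coaction H K)
    (dB : Coaction H B) (X : Imprim K B) : Type 1 where
  XS : Imprim dK.AS.T dB.AS.T
  xtmul : X.X → H.S.carrier → XS.X
  xtmul_add_left : ∀ x y s, xtmul (x + y) s = xtmul x s + xtmul y s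
  xtmul_add_right : ∀ x s t, xtmul x (s + t) = xtmul x s + xtmul x t
  xtmul_smul_left : ∀ (c : ℂ) x s, xtmul (c • x) s = c • xtmul x s
  xtmul_smul_right : ∀ (c : ℂ) x s, xtmul x (c • s) = c • xtmul x s
  xtmul_rinner : ∀ x y s t,
    XS.rinner (xtmul x s) (xtmul y t) = dB.AS.tmul (X.rinner x y) (star s * t)
  xtmul_linner : ∀ x y s t,
    XS.linner (xtmul x s) (xtmul y t) = dK.AS.tmul (X.linner x y) (s * star t)
  xtmul_act : ∀ k s x t, XS.act (dK.AS.tmul k s) (xtmul x t) = xtmul (X.act k x) (s * t)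
  xtmul_rsmul : ∀ x t b s,
    XS.rsmul (xtmul x t) (dB.AS.tmul b s) = xtmul (X.rsmul x b) (t * s)
  xdense : spanDense {z : XS.X | ∃ x s, z = xtmul x s}
  /-- the element `δ_X(x)·(1 ⊗ s)` of `X ⊗ S` -/
  lamX : X.X → H.S.carrier → XS.X
  lamX_add : ∀ x y s, lamX (x + y) s = lamX x s + lamX y s
  lamX_rinner : ∀ x y s t,
    dB.mAS.incl (XS.rinner (lamX x s) (lamX y t))
      = dB.oneTens (star s) * dB.coact.toHom (X.rinner x y) * dB.oneTens t
  /-- the element `(1 ⊗ s)·δ_X(x)` of `X ⊗ S` -/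
  lamX' : H.S.carrier → X.X → XS.X
  lamX'_add : ∀ s x y, lamX' s (x + y) = lamX' s x + lamX' s y
  lamX'_linner : ∀ s t x y,
    dK.mAS.incl (XS.linner (lamX' s x) (lamX' t y))
      = dK.oneTens s * dK.coact.toHom (X.linner x y) * dK.oneTens (star t)

/-- A realization of the linking algebra `L(X) = [[K, X], [X~, B]]` of a `K – B`
imprimitivity bimodule. -/
structure Linking {K B : CStarAlg} (X : Imprim K B) : Type 1 where
  L : CStarAlg
  iK : CStarHom K L
  iB : CStarHom B L
  iX : X.X →ₗ[ℂ] L.carrier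
  iK_injective : Function.Injective iK
  iB_injective : Function.Injective iB
  iX_injective : Function.Injective iX
  mul_KX : ∀ k x, iK k * iX x = iX (X.act k x)
  mul_XB : ∀ x b, iX x * iB b = iX (X.rsmul x b)
  mul_XstarX : ∀ x y, star (iX x) * iX y = iB (X.rinner x y)
  mul_XXstar : ∀ x y, iX x * star (iX y) = iK (X.linner x y)
  mul_KB : ∀ k b, iK k * iB b = 0
  mul_BK : ∀ b k, iB b * iK k = 0
  mul_XX : ∀ x y, iX x * iX y = 0
  span_dense : DenseSpan (A := L)
    {z | (∃ k, z = iK k) ∨ (∃ b, z = iB b) ∨ (∃ x, z = iX x) ∨ (∃ x, z = star (iX x))}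

/-- The coaction `δ_L` of `H` on the linking algebra `L(X)` associated with an
imprimitivity bimodule coaction `(δ_K, δ_X, δ_B)`. -/
structure LinkingCoaction {H : HopfCStar} {K B : CStarAlg} {dK : Coaction H K}
    {dB : Coaction H B} {X : Imprim K B} (ibc : IBCoaction H dK dB X)
    (lk : Linking X) : Type 1 where
  dL : Coaction H lk.L
  /-- the embedding `K ⊗ S → L ⊗ S` -/
  eKS : CStarHom dK.AS.T dL.AS.T
  eKS_tmul : ∀ k s, eKS (dK.AS.tmul k s) = dL.AS.tmul (lk.iK k) s
  /-- the embedding `B ⊗ S → L ⊗ S` -/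
  eBS : CStarHom dB.AS.T dL.AS.T
  eBS_tmul : ∀ b s, eBS (dB.AS.tmul b s) = dL.AS.tmul (lk.iB b) s
  /-- the embedding `X ⊗ S → L ⊗ S` -/
  eXS : ibc.XS.X →ₗ[ℂ] dL.AS.T.carrier
  eXS_tmul : ∀ x s, eXS (ibc.xtmul x s) = dL.AS.tmul (lk.iX x) s
  res_K : ∀ k s, dL.lam (lk.iK k) s = eKS (dK.lam k s)
  res_B : ∀ b s, dL.lam (lk.iB b) s = eBS (dB.lam b s)
  res_X : ∀ x s, dL.lam (lk.iX x) s = eXS (ibc.lamX x s)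

/-- A regular multiplicative unitary of compact type such that `S = S_V` has a
faithful Haar state `φ`; the invariance of `φ` is recorded via the slice maps
`id ⊗ φ` and `φ ⊗ id`, and `ρ(φ) = (id ⊗ φ)(V) ∈ Ŝ_V` is recorded as `rhoHaar`. -/
structure CompactMU : Type 1 extends MultUnitary where
  oneS : hopfS.S.carrier
  oneS_mul : ∀ s, oneS * s = s
  mul_oneS : ∀ s, s * oneS = s
  haar : hopfS.S.carrier →ₗ[ℂ] ℂ
  haar_one : haar oneS = 1
  haar_pos : ∀ s, 0 ≤ haar (star s * s)
  haar_faithful : ∀ s, haar (star s * s) = 0 → s = 0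
  sliceL : hopfS.SS.T.carrier →ₗ[ℂ] hopfS.S.carrier
  sliceL_tmul : ∀ s t, sliceL (hopfS.SS.tmul s t) = haar t • s
  sliceR : hopfS.SS.T.carrier →ₗ[ℂ] hopfS.S.carrier
  sliceR_tmul : ∀ s t, sliceR (hopfS.SS.tmul s t) = haar s • t
  haar_left_inv : ∀ s,
    sliceL (hopfS.mSS.lmul (hopfS.comul.toHom s) (hopfS.SS.tmul oneS oneS)) = haar s • oneS
  haar_right_inv : ∀ s,
    sliceR (hopfS.mSS.lmul (hopfS.comul.toHom s) (hopfS.SS.tmul oneS oneS)) = haar s • oneS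
  /-- `ρ(φ) = (id ⊗ φ)(V) ∈ Ŝ_V` -/
  rhoHaar : hopfShat.S.carrier
  rhoHaar_star : star rhoHaar = rhoHaar
  rhoHaar_idem : rhoHaar * rhoHaar = rhoHaar

/-- A realization of the fixed-point algebra `A^δ` of a coaction. -/
structure FixedAlg {H : HopfCStar} {A : CStarAlg} (d : Coaction H A) : Type 1 where
  F0 : CStarAlg
  iF : CStarHom F0 A
  iF_injective : Function.Injective iF
  range_eq : Set.range iF = d.FixedSet

/-- The conditional expectation `E = (id ⊗ φ) ∘ δ : A → A^δ` associated with a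
coaction of a compact-type multiplicative unitary with Haar state `φ`. -/
structure CondExp (V : CompactMU) {A : CStarAlg} (d : Coaction V.hopfS A)
    (fx : FixedAlg d) : Type where
  E : A.carrier →ₗ[ℂ] A.carrier
  /-- the slice map `id ⊗ φ : A ⊗ S → A` -/
  slice : d.AS.T.carrier →ₗ[ℂ] A.carrier
  slice_tmul : ∀ a s, slice (d.AS.tmul a s) = V.haar s • a
  E_eq : ∀ a, E a = slice (d.lam a V.oneS)
  E_fixed : ∀ a, ∃ a0, fx.iF a0 = E a
  E_exp : ∀ a a0, E (a * fx.iF a0) = E a * fx.iF a0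

/-- A realization of the Hausdorff completion `ℱ(A)` of the pre-Hilbert
`A^δ`-module `A` (inner product `⟨a,b⟩ = E(a*b)`). -/
structure FComp (V : CompactMU) {A : CStarAlg} (d : Coaction V.hopfS A)
    (fx : FixedAlg d) (ce : CondExp V d fx) : Type 1 where
  F : HilbMod fx.F0
  eta : A.carrier →ₗ[ℂ] F.X
  eta_dense : spanDense (Set.range eta)
  eta_rinner : ∀ a b, fx.iF (F.rinner (eta a) (eta b)) = ce.E (star a * b)
  eta_rsmul : ∀ a a0, F.rsmul (eta a) a0 = eta (a * fx.iF a0)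

/-- A realization of the C*-algebra `𝓛_{A^δ}(ℱ)` of adjointable operators on a
Hilbert module, with the generalized compact operators `θ_{x,y}` recorded. -/
structure AdjOps {B0 : CStarAlg} (F : HilbMod B0) : Type 1 where
  LF : CStarAlg
  oneLF : LF.carrier
  oneLF_mul : ∀ z : LF.carrier, oneLF * z = z
  mul_oneLF : ∀ z : LF.carrier, z * oneLF = z
  act : LF.carrier → F.X → F.X
  act_add : ∀ T x y, act T (x + y) = act T x + act T y
  act_smul : ∀ (c : ℂ) T x, act T (c • x) = c • act T x
  add_act : ∀ T T' x, act (T + T') x = act T x + act T' x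
  act_mul : ∀ T T' x, act (T * T') x = act T (act T' x)
  act_one : ∀ x, act oneLF x = x
  act_adjoint : ∀ T x y, F.rinner (act T x) y = F.rinner x (act (star T) y)
  act_rsmul : ∀ T x b, act T (F.rsmul x b) = F.rsmul (act T x) b
  faithful : ∀ T, (∀ x, act T x = 0) → T = 0
  /-- the generalized rank-one operator `θ_{x,y} : z ↦ x·⟨y,z⟩` -/
  theta : F.X → F.X → LF.carrier
  theta_spec : ∀ x y z, act (theta x y) z = F.rsmul x (F.rinner y z)

/-- A realization of Ng's `A ×_{δ,r} Ŝ – A^δ` imprimitivity bimodule `ℱ(A)`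
(the Hausdorff completion of `A`), with the operations of
[NgME, Proposition 2.11] recorded. -/
structure NgF (V : CompactMU) {A : CStarAlg} (d : Coaction V.hopfS A)
    (rc : ReducedCP V.hopfShat.S d) (fx : FixedAlg d) (ce : CondExp V d fx) :
    Type 1 where
  F : Imprim rc.X fx.F0
  eta : A.carrier →ₗ[ℂ] F.X
  eta_dense : spanDense (Set.range eta)
  eta_rinner : ∀ a b, fx.iF (F.rinner (eta a) (eta b)) = ce.E (star a * b)
  eta_rsmul : ∀ a a0, F.rsmul (eta a) a0 = eta (a * fx.iF a0)
  eta_linner : ∀ a b,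
    rc.iota (F.linner (eta a) (eta b)) = rc.piL a * rc.rhoE V.rhoHaar * rc.piL (star b)
  eta_act : ∀ (g : rc.X.carrier) (a b c : A.carrier),
    rc.iota g = rc.piL a * rc.rhoE V.rhoHaar * rc.piL b →
    F.act g (eta c) = eta (a * ce.E (b * c))
  left_dense : closure (Submodule.span ℂ
      {z : rc.E.carrier | ∃ a b, z = rc.piL a * rc.rhoE V.rhoHaar * rc.piL b}
      : Set rc.E.carrier)
    = Set.range rc.iota
/-- The basic-construction presentation of `ℱ(A)`: the C*-basic construction
`C*⟨A, e_A⟩ = closed span{λ(A) e_A λ(A)}` together with `ℱ(A)` as a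
`C*⟨A,e_A⟩ – A^δ` imprimitivity bimodule. -/
structure BasicF {H : HopfCStar} {A : CStarAlg} (d : Coaction H A)
    (fx : FixedAlg d) (E : A.carrier → A.carrier) : Type 1 where
  /-- the C*-basic construction `C*⟨A, e_A⟩` -/
  BC : CStarAlg
  /-- the element `λ(a) e_A λ(b)` -/
  lamE : A.carrier → A.carrier → BC.carrier
  lamE_star : ∀ a b, star (lamE a b) = lamE (star b) (star a)
  lamE_mul : ∀ a b c d0, lamE a b * lamE c d0 = lamE (a * E (b * c)) d0
  lamE_dense : DenseSpan (A := BC) {z | ∃ a b, z = lamE a b}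
  F : Imprim BC fx.F0
  eta : A.carrier →ₗ[ℂ] F.X
  eta_dense : spanDense (Set.range eta)
  eta_rinner : ∀ a b, fx.iF (F.rinner (eta a) (eta b)) = E (star a * b)
  eta_rsmul : ∀ a a0, F.rsmul (eta a) a0 = eta (a * fx.iF a0)
  eta_linner : ∀ a b, F.linner (eta a) (eta b) = lamE a (star b)
  eta_act : ∀ a b c, F.act (lamE a b) (eta c) = eta (a * E (b * c))

/-- The data of Ng's setting: multiplicative unitaries `U`, `V`, `W` coming from
discrete Kac systems, with `W` an amenable normal submultiplicative unitary of `V`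
and `U` the corresponding quotient, recorded through the reduced Hopf C*-algebras
`S_V`, `S_W`, `S_U`, `Ŝ_U`, the full duals `(Ŝ_V)_p`, `(Ŝ_W)_p`, `(Ŝ_U)_p`, and the
Hopf *-homomorphisms `L_{V,W} : S_V → S_W`, `ρ_{V,U} : (Ŝ_V)_p → (Ŝ_U)_p` and
`ρ_{W,V} : (Ŝ_W)_p → (Ŝ_V)_p` (discreteness, amenability of `W` and normality are
suppressed in this axiomatization). -/
structure NgSetting : Type 1 where
  /-- the Hopf C*-algebra `S_V` -/
  hopfSV : HopfCStar
  /-- the full dual `(Ŝ_V)_p` -/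
  ShatVp : CStarAlg
  /-- the Hopf C*-algebra `S_W` -/
  hopfSW : HopfCStar
  /-- the full dual `(Ŝ_W)_p` -/
  ShatWp : CStarAlg
  /-- the Hopf C*-algebra `S_U` -/
  hopfSU : HopfCStar
  /-- the reduced Hopf C*-algebra `Ŝ_U` -/
  hopfShatU : HopfCStar
  /-- the full dual `(Ŝ_U)_p` -/
  ShatUp : CStarAlg
  LVW : CStarHom hopfSV.S hopfSW.S
  LVW_surjective : Function.Surjective LVW
  rhoVU : CStarHom ShatVp ShatUp
  rhoVU_surjective : Function.Surjective rhoVU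
  rhoWV : CStarHom ShatWp ShatVp
  /-- the reduction map `(Ŝ_U)_p → Ŝ_U` -/
  redU : CStarHom ShatUp hopfShatU.S

/-- The restriction `δ| = (id ⊗ L_{V,W}) ∘ δ` to `S_W` of a coaction `δ` of `S_V`. -/
structure Restriction (N : NgSetting) {A : CStarAlg} (d : Coaction N.hopfSV A) :
    Type 1 where
  dW : Coaction N.hopfSW A
  /-- the map `id ⊗ L_{V,W} : A ⊗ S_V → A ⊗ S_W` -/
  resT : CStarHom d.AS.T dW.AS.T
  resT_tmul : ∀ a s, resT (d.AS.tmul a s) = dW.AS.tmul a (N.LVW s)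
  res_lam : ∀ a s, dW.lam a (N.LVW s) = resT (d.lam a s)

/-- A realization of the imprimitivity bimodule crossed product `X ×_{δ_X} Ŝ`
(the corner `j_L(p)(L(X) ×_{δ_L} Ŝ) j_L(q)` of the crossed product of the linking
algebra), spanned by the elements `j_L(x) μ_L(y)`. -/
structure IBCrossed {H : HopfCStar} {K B : CStarAlg} {dK : Coaction H K}
    {dB : Coaction H B} {X : Imprim K B} (ibc : IBCoaction H dK dB X)
    (Shatp : CStarAlg) (cpK : FullCP Shatp dK) (cpB : FullCP Shatp dB) : Type 1 where
  Z : Imprim cpK.C cpB.C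
  /-- the element `j_L(x) μ_L(y)` of `X ×_{δ_X} Ŝ` -/
  gen : X.X → Shatp.carrier → Z.X
  gen_add_left : ∀ x y s, gen (x + y) s = gen x s + gen y s
  gen_add_right : ∀ x s t, gen x (s + t) = gen x s + gen x t
  gen_rinner : ∀ x y s t,
    cpB.mC.incl (Z.rinner (gen x s) (gen y t))
      = star (cpB.mu.toHom s) * cpB.j.toHom (X.rinner x y) * cpB.mu.toHom t
  gen_dense : spanDense {z : Z.X | ∃ x s, z = gen x s}

/-- A realization of the reduced imprimitivity bimodule crossed product
`X ×_{δ_X,r} Ŝ` (the corner of the reduced crossed product of the linking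
algebra). -/
structure IBCrossedRed {H : HopfCStar} {K B : CStarAlg} {dK : Coaction H K}
    {dB : Coaction H B} {X : Imprim K B} (ibc : IBCoaction H dK dB X)
    (Shat : CStarAlg) (rcK : ReducedCP Shat dK) (rcB : ReducedCP Shat dB) : Type 1 where
  Z : Imprim rcK.X rcB.X
  /-- the element `π_L(x)(1 ⊗ ρ(y))` of `X ×_{δ_X,r} Ŝ` -/
  gen : X.X → Shat.carrier → Z.X
  gen_add_left : ∀ x y s, gen (x + y) s = gen x s + gen y s
  gen_add_right : ∀ x s t, gen x (s + t) = gen x s + gen x t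
  gen_rinner : ∀ x y s t,
    rcB.iota (Z.rinner (gen x s) (gen y t))
      = star (rcB.rhoE s) * rcB.piL (X.rinner x y) * rcB.rhoE t
  gen_dense : spanDense {z : Z.X | ∃ x s, z = gen x s}

/-- A realization of Ng's imprimitivity bimodule `N(C)` between
`C ×_δ Ŝ_V ×_{δ̂|,r} S_U` and `C ×_{δ|} Ŝ_W`, obtained from `ℱ(C ×_δ Ŝ_V)` (for the
effective restricted dual coaction `δ̂|` of `Ŝ_U`) by transporting the right
coefficient algebra along Ng's isomorphism
`φ_C = j_C^V × (μ_C^V ∘ ρ_{W,V}) : C ×_{δ|} Ŝ_W ≅ (C ×_δ Ŝ_V)^{δ̂|}`. -/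
structure NgBimod (N : NgSetting) {C : CStarAlg} (d : Coaction N.hopfSV C)
    (cp : FullCP N.ShatVp d) (res : Restriction N d) (cpW : FullCP N.ShatWp res.dW)
    (dual : Coaction N.hopfShatU cp.C) (rc : ReducedCP N.hopfSU.S dual) : Type 1 where
  Nb : Imprim rc.X cpW.C
  /-- Ng's homomorphism `φ_C = j_C^V × (μ_C^V ∘ ρ_{W,V})`, an isomorphism of
  `C ×_{δ|} Ŝ_W` onto the fixed-point algebra `(C ×_δ Ŝ_V)^{δ̂|}` -/
  phi : CStarHom cpW.C cp.C
  phi_injective : Function.Injective phi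
  phi_gen : ∀ a y, cp.mC.incl (phi (cpW.gen a y)) = cp.j.toHom a * cp.mu.toHom (N.rhoWV y)
  phi_range : Set.range phi = {z : cp.C.carrier | dual.coact.toHom z = dual.tensOne z}
  /-- the canonical dense map of `C ×_δ Ŝ_V` into `N(C)` -/
  eta : cp.C.carrier →ₗ[ℂ] Nb.X
  eta_dense : spanDense (Set.range eta)
  eta_rsmul : ∀ z w, Nb.rsmul (eta z) w = eta (z * phi w)


/-! ### Auxiliary general lemmas -/

section AuxGeneral

variable {A₀ B₀ : Type} [NonUnitalCStarAlgebra A₀] [NonUnitalCStarAlgebra B₀]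

/-- Star homomorphisms between C*-algebras are continuous. -/
lemma CStarHom.cont' (f : A₀ →⋆ₙₐ[ℂ] B₀) : Continuous f :=
  AddMonoidHomClass.continuous_of_bound f 1 fun a => by
    simpa [one_mul] using NonUnitalStarAlgHom.norm_apply_le f a

lemma smul_star_mul_self' (t : ℝ) (ht : 0 ≤ t) (s : A₀) :
    (t : ℂ) • (star s * s) = star ((Real.sqrt t : ℂ) • s) * ((Real.sqrt t : ℂ) • s) := by
  rw [star_smul, smul_mul_smul_comm]
  congr 1
  rw [show star ((Real.sqrt t : ℂ)) = (Real.sqrt t : ℂ) from Complex.conj_ofReal _,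
    ← Complex.ofReal_mul, Real.mul_self_sqrt ht]

lemma nonneg_factor' (a : A₀) (ha : 0 ≤ (a : Unitization ℂ A₀)) :
    ∃ c : A₀, a = star c * c := by
  have hsa' : IsSelfAdjoint ((a : Unitization ℂ A₀)) := .of_nonneg ha
  have hsa : IsSelfAdjoint a := by
    have := hsa'.star_eq
    rw [← Unitization.inr_star] at this
    exact Unitization.inr_injective (R := ℂ) this
  have hspec : ∀ x ∈ quasispectrum ℝ a, 0 ≤ x := by
    intro x hx
    rw [Unitization.quasispectrum_eq_spectrum_inr' ℝ ℂ a] at hx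
    exact spectrum_nonneg_of_nonneg ha hx
  refine ⟨cfcₙ (fun x : ℝ => Real.sqrt x) a, ?_⟩
  have h1 : IsSelfAdjoint (cfcₙ (fun x : ℝ => Real.sqrt x) a) := cfcₙ_predicate _ a
  rw [h1.star_eq, ← cfcₙ_mul ..]
  refine Eq.symm ?_
  calc cfcₙ (fun x : ℝ => Real.sqrt x * Real.sqrt x) a = cfcₙ (fun x : ℝ => x) a :=
        cfcₙ_congr fun x hx => Real.mul_self_sqrt (hspec x hx)
    _ = a := cfcₙ_id ℝ a

lemma sa_decomp' (a : A₀) : ∃ h₁ h₂ : A₀, IsSelfAdjoint h₁ ∧ IsSelfAdjoint h₂ ∧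
    a = h₁ + Complex.I • h₂ ∧ ‖h₁‖ ≤ ‖a‖ ∧ ‖h₂‖ ≤ ‖a‖ := by
  refine ⟨(2⁻¹ : ℂ) • (a + star a), (-(2⁻¹) * Complex.I : ℂ) • (a - star a), ?_, ?_, ?_, ?_, ?_⟩
  · rw [IsSelfAdjoint, star_smul, star_add, star_star, add_comm]
    congr 1
    simp [Complex.ext_iff]
  · rw [IsSelfAdjoint, star_smul, star_sub, star_star]
    rw [show star (-(2⁻¹) * Complex.I : ℂ) = ((2⁻¹) * Complex.I : ℂ) by simp [Complex.ext_iff]]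
    rw [show (star a - a) = (-1 : ℂ) • (a - star a) by simp [neg_sub]]
    rw [smul_smul]; congr 1; ring
  · rw [smul_smul]
    rw [show (Complex.I * (-(2⁻¹) * Complex.I) : ℂ) = (2⁻¹ : ℂ) by
      simp [Complex.ext_iff]]
    rw [← smul_add]
    rw [show a + star a + (a - star a) = (2 : ℂ) • a by rw [two_smul]; abel]
    rw [smul_smul]; norm_num
  · calc ‖(2⁻¹ : ℂ) • (a + star a)‖ ≤ ‖(2⁻¹:ℂ)‖ * (‖a‖ + ‖star a‖) := by
          rw [norm_smul]; gcongr; exact norm_add_le _ _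
      _ ≤ ‖a‖ := by rw [norm_star]; simp; linarith
  · calc ‖(-(2⁻¹) * Complex.I : ℂ) • (a - star a)‖
          ≤ ‖(-(2⁻¹)*Complex.I:ℂ)‖ * (‖a‖ + ‖star a‖) := by
          rw [norm_smul]; gcongr; exact norm_sub_le _ _
      _ ≤ ‖a‖ := by rw [norm_star]; simp; linarith

lemma pos_decomp' {a : A₀} (ha : IsSelfAdjoint a) :
    ∃ s t : A₀, a = star s * s - star t * t ∧ ‖star s * s‖ ≤ ‖a‖ ∧ ‖star t * t‖ ≤ ‖a‖ := by
  have hq : ∀ x ∈ quasispectrum ℝ a, |x| ≤ ‖a‖ := by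
    intro x hx
    rw [Unitization.quasispectrum_eq_spectrum_inr' ℝ ℂ a] at hx
    simpa [Unitization.norm_inr] using spectrum.norm_le_norm_of_mem hx
  refine ⟨cfcₙ (fun x : ℝ => Real.sqrt (max x 0)) a,
          cfcₙ (fun x : ℝ => Real.sqrt (max (-x) 0)) a, ?_, ?_, ?_⟩
  · have h1 : IsSelfAdjoint (cfcₙ (fun x : ℝ => Real.sqrt (max x 0)) a) := cfcₙ_predicate _ a
    have h2 : IsSelfAdjoint (cfcₙ (fun x : ℝ => Real.sqrt (max (-x) 0)) a) := cfcₙ_predicate _ a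
    rw [h1.star_eq, h2.star_eq, ← cfcₙ_mul .., ← cfcₙ_mul ..]
    have e1 : cfcₙ (fun x : ℝ => Real.sqrt (max x 0) * Real.sqrt (max x 0)) a
        = cfcₙ (fun x : ℝ => max x 0) a :=
      cfcₙ_congr fun x _ => Real.mul_self_sqrt (le_max_right x 0)
    have e2 : cfcₙ (fun x : ℝ => Real.sqrt (max (-x) 0) * Real.sqrt (max (-x) 0)) a
        = cfcₙ (fun x : ℝ => max (-x) 0) a :=
      cfcₙ_congr fun x _ => Real.mul_self_sqrt (le_max_right _ 0)
    rw [e1, e2, ← cfcₙ_sub ..]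
    refine Eq.symm ?_
    calc cfcₙ (fun x : ℝ => max x 0 - max (-x) 0) a = cfcₙ (fun x : ℝ => x) a := by
          refine cfcₙ_congr fun x _ => ?_
          rcases le_total x 0 with h | h
          · simp [max_eq_right h, max_eq_left (by linarith : (0:ℝ) ≤ -x)]
          · simp [max_eq_left h, max_eq_right (by linarith : -x ≤ (0:ℝ))]
      _ = a := cfcₙ_id ℝ a
  · have h1 : IsSelfAdjoint (cfcₙ (fun x : ℝ => Real.sqrt (max x 0)) a) := cfcₙ_predicate _ a
    rw [h1.star_eq, ← cfcₙ_mul ..]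
    have e1 : cfcₙ (fun x : ℝ => Real.sqrt (max x 0) * Real.sqrt (max x 0)) a
        = cfcₙ (fun x : ℝ => max x 0) a :=
      cfcₙ_congr fun x _ => Real.mul_self_sqrt (le_max_right x 0)
    rw [e1]
    refine norm_cfcₙ_le fun x hx => ?_
    have := hq x hx
    rcases le_total x 0 with h | h
    · simpa [max_eq_right h] using norm_nonneg a
    · rw [max_eq_left h, Real.norm_of_nonneg h]
      calc x ≤ |x| := le_abs_self x
        _ ≤ ‖a‖ := this
  · have h2 : IsSelfAdjoint (cfcₙ (fun x : ℝ => Real.sqrt (max (-x) 0)) a) := cfcₙ_predicate _ a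
    rw [h2.star_eq, ← cfcₙ_mul ..]
    have e2 : cfcₙ (fun x : ℝ => Real.sqrt (max (-x) 0) * Real.sqrt (max (-x) 0)) a
        = cfcₙ (fun x : ℝ => max (-x) 0) a :=
      cfcₙ_congr fun x _ => Real.mul_self_sqrt (le_max_right _ 0)
    rw [e2]
    refine norm_cfcₙ_le fun x hx => ?_
    have := hq x hx
    rcases le_total (-x) 0 with h | h
    · simpa [max_eq_right h] using norm_nonneg a
    · rw [max_eq_left h, Real.norm_of_nonneg h]
      calc -x ≤ |x| := neg_le_abs x
        _ ≤ ‖a‖ := this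

lemma decomp4' (a : A₀) :
    ∃ p₁ p₂ p₃ p₄ s₁ s₂ s₃ s₄ : A₀,
      p₁ = star s₁ * s₁ ∧ p₂ = star s₂ * s₂ ∧ p₃ = star s₃ * s₃ ∧ p₄ = star s₄ * s₄ ∧
      a = p₁ - p₂ + Complex.I • p₃ - Complex.I • p₄ ∧
      ‖p₁‖ ≤ ‖a‖ ∧ ‖p₂‖ ≤ ‖a‖ ∧ ‖p₃‖ ≤ ‖a‖ ∧ ‖p₄‖ ≤ ‖a‖ := by
  obtain ⟨h₁, h₂, hsa₁, hsa₂, hdec, hn₁, hn₂⟩ := sa_decomp' a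
  obtain ⟨s₁, s₂, d₁, m₁, m₂⟩ := pos_decomp' hsa₁
  obtain ⟨s₃, s₄, d₂, m₃, m₄⟩ := pos_decomp' hsa₂
  refine ⟨star s₁ * s₁, star s₂ * s₂, star s₃ * s₃, star s₄ * s₄,
    s₁, s₂, s₃, s₄, rfl, rfl, rfl, rfl, ?_, m₁.trans hn₁, m₂.trans hn₁,
    m₃.trans hn₂, m₄.trans hn₂⟩
  rw [hdec, d₁, d₂]
  rw [smul_sub]
  abel

def inrCLM' (A₀ : Type) [NonUnitalCStarAlgebra A₀] : A₀ →L[ℂ] Unitization ℂ A₀ :=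
  { toFun := (Unitization.inr : A₀ → Unitization ℂ A₀)
    map_add' := fun x y => by simp
    map_smul' := fun c x => by simp
    cont := (Unitization.isometry_inr (𝕜 := ℂ) (A := A₀)).continuous }

end AuxGeneral

section AuxBound

lemma posmap_bound' {A₀ B₀ : Type} [NonUnitalCStarAlgebra A₀] [NonUnitalCStarAlgebra B₀]
    (φ : A₀ →ₗ[ℂ] B₀) (hφ : ∀ a : A₀, ∃ c : B₀, φ (star a * a) = star c * c) :
    ∃ C : ℝ, ∀ a : A₀, ‖φ a‖ ≤ C * ‖a‖ := by
  have key : ∃ C : ℝ, 0 ≤ C ∧ ∀ a : A₀, ‖a‖ ≤ 1 → (∃ s, a = star s * s) → ‖φ a‖ ≤ C := by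
    by_contra hC
    push_neg at hC
    have sel : ∀ n : ℕ, ∃ a : A₀, ‖a‖ ≤ 1 ∧ (∃ s, a = star s * s) ∧ (4:ℝ)^n < ‖φ a‖ := by
      intro n
      obtain ⟨a, h1, h2, h3⟩ := hC ((4:ℝ)^n) (by positivity)
      exact ⟨a, h1, h2, h3⟩
    choose f hf1 hf2 hf3 using sel
    choose s hs using hf2
    set v : ℕ → A₀ := fun n => (((2:ℝ)⁻¹^n : ℝ) : ℂ) • f n with hv
    have hvnorm : ∀ n, ‖v n‖ ≤ (2⁻¹:ℝ)^n := fun n => by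
      rw [hv]
      simp only [norm_smul]
      calc ‖((((2:ℝ)⁻¹^n : ℝ)) : ℂ)‖ * ‖f n‖ ≤ (2⁻¹:ℝ)^n * 1 := by
            rw [Complex.norm_real, Real.norm_of_nonneg (by positivity)]
            exact mul_le_mul_of_nonneg_left (hf1 n) (by positivity)
        _ = (2⁻¹:ℝ)^n := mul_one _
    have hsum : Summable v := by
      have hgeo : Summable fun m : ℕ => (2⁻¹:ℝ)^m :=
        summable_geometric_of_lt_one (by norm_num) (by norm_num)
      exact Summable.of_norm_bounded hgeo hvnorm
    set y : A₀ := ∑' n, v n with hy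
    have hvform : ∀ n, v n = star ((Real.sqrt ((2:ℝ)⁻¹^n) : ℂ) • s n) *
        ((Real.sqrt ((2:ℝ)⁻¹^n) : ℂ) • s n) := fun n => by
      rw [hv]; simp only; rw [hs n]; exact smul_star_mul_self' _ (by positivity) _
    have hvpos : ∀ n, 0 ≤ ((v n : A₀) : Unitization ℂ A₀) := fun n => by
      rw [hvform n]
      rw [Unitization.inr_mul, Unitization.inr_star]
      exact star_mul_self_nonneg _
    have hle : ∀ n, ((v n : A₀) : Unitization ℂ A₀) ≤ ((y : A₀) : Unitization ℂ A₀) := by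
      intro n
      rw [← sub_nonneg, ← Unitization.inr_sub ℂ]
      classical
      have hrepr : y - v n = ∑' m, (if m = n then 0 else v m) := by
        rw [hy, hsum.tsum_eq_add_tsum_ite n]
        abel
      rw [hrepr]
      have hsum2 : Summable (fun m => if m = n then 0 else v m) := by
        have hgeo : Summable fun m : ℕ => (2⁻¹:ℝ)^m :=
          summable_geometric_of_lt_one (by norm_num) (by norm_num)
        refine Summable.of_norm_bounded hgeo fun k => ?_
        by_cases h : k = n
        · simp [h]
        · simpa [h] using hvnorm k
      have hmap := (inrCLM' A₀).hasSum hsum2.hasSum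
      have hterm : ∀ m, 0 ≤ (inrCLM' A₀) (if m = n then 0 else v m) := by
        intro m
        by_cases h : m = n
        · simp [h, inrCLM']
        · simpa [h, inrCLM'] using hvpos m
      have hmem : (inrCLM' A₀) (∑' m, (if m = n then 0 else v m))
          ∈ {x : Unitization ℂ A₀ | 0 ≤ x} := by
        refine IsClosed.mem_of_tendsto CStarAlgebra.isClosed_nonneg hmap.tendsto_sum_nat ?_
        filter_upwards with N
        show (0 : Unitization ℂ A₀) ≤ ∑ i ∈ Finset.range N,
          (inrCLM' A₀) (if i = n then 0 else v i)
        induction N with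
        | zero => simp
        | succ k ih => rw [Finset.sum_range_succ]; exact add_nonneg ih (hterm k)
      exact hmem
    have hcontr : ∀ n : ℕ, (2:ℝ)^n < ‖φ y‖ := by
      intro n
      have hzel := hle n
      have hz : 0 ≤ ((y - v n : A₀) : Unitization ℂ A₀) := by
        rw [Unitization.inr_sub ℂ, sub_nonneg]; exact hzel
      obtain ⟨d, hd⟩ := nonneg_factor' (y - v n) hz
      obtain ⟨e, he⟩ := hφ d
      obtain ⟨e', he'⟩ := hφ ((Real.sqrt ((2:ℝ)⁻¹^n) : ℂ) • s n)
      have hφv : φ (v n) = star e' * e' := by rw [hvform n, he']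
      have hφz : φ (y - v n) = star e * e := by rw [hd, he]
      have hple : ((φ (v n) : B₀) : Unitization ℂ B₀) ≤ ((φ y : B₀) : Unitization ℂ B₀) := by
        rw [← sub_nonneg, ← Unitization.inr_sub ℂ, ← map_sub, hφz,
          Unitization.inr_mul, Unitization.inr_star]
        exact star_mul_self_nonneg _
      have hppos : 0 ≤ ((φ (v n) : B₀) : Unitization ℂ B₀) := by
        rw [hφv, Unitization.inr_mul, Unitization.inr_star]
        exact star_mul_self_nonneg _
      have hnorm := CStarAlgebra.norm_le_norm_of_nonneg_of_le hppos hple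
      rw [Unitization.norm_inr, Unitization.norm_inr] at hnorm
      have hφvn : ‖φ (v n)‖ = (2⁻¹:ℝ)^n * ‖φ (f n)‖ := by
        rw [hv]
        simp only [map_smul, norm_smul, Complex.norm_real,
          Real.norm_of_nonneg (by positivity : (0:ℝ) ≤ (2:ℝ)⁻¹^n)]
      have h4 : (4:ℝ)^n < ‖φ (f n)‖ := hf3 n
      have hlt : (2⁻¹:ℝ)^n * (4:ℝ)^n < ‖φ y‖ := by
        calc (2⁻¹:ℝ)^n * (4:ℝ)^n < (2⁻¹:ℝ)^n * ‖φ (f n)‖ :=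
              mul_lt_mul_of_pos_left h4 (by positivity)
          _ = ‖φ (v n)‖ := (hφvn).symm
          _ ≤ ‖φ y‖ := hnorm
      calc (2:ℝ)^n = (2⁻¹:ℝ)^n * (4:ℝ)^n := by
            rw [← mul_pow]; norm_num
        _ < ‖φ y‖ := hlt
    obtain ⟨n, hn⟩ := pow_unbounded_of_one_lt ‖φ y‖ (by norm_num : (1:ℝ) < 2)
    exact absurd (hcontr n) (not_lt.mpr hn.le)
  obtain ⟨C, hC0, hCb⟩ := key
  refine ⟨4 * C, fun a => ?_⟩
  rcases eq_or_ne a 0 with rfl | ha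
  · simp
  have hta : 0 < ‖a‖ := norm_pos_iff.mpr ha
  obtain ⟨p₁, p₂, p₃, p₄, s₁, s₂, s₃, s₄, e₁, e₂, e₃, e₄, hdec, n₁, n₂, n₃, n₄⟩ := decomp4' a
  have bound : ∀ (p sp : A₀), p = star sp * sp → ‖p‖ ≤ ‖a‖ → ‖φ p‖ ≤ C * ‖a‖ := by
    intro p sp hp hnp
    have hq : ((‖a‖⁻¹ : ℝ) : ℂ) • p = star ((Real.sqrt ‖a‖⁻¹ : ℂ) • sp) *
        ((Real.sqrt ‖a‖⁻¹ : ℂ) • sp) := by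
      rw [hp]; exact smul_star_mul_self' _ (by positivity) _
    have hqn : ‖((‖a‖⁻¹ : ℝ) : ℂ) • p‖ ≤ 1 := by
      rw [norm_smul, Complex.norm_real, Real.norm_of_nonneg (by positivity)]
      rw [inv_mul_le_iff₀ hta]
      simpa using hnp
    have := hCb _ hqn ⟨_, hq⟩
    rw [map_smul, norm_smul, Complex.norm_real, Real.norm_of_nonneg (by positivity)] at this
    calc ‖φ p‖ = ‖a‖ * (‖a‖⁻¹ * ‖φ p‖) := by field_simp
      _ ≤ ‖a‖ * C := mul_le_mul_of_nonneg_left this hta.le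
      _ = C * ‖a‖ := mul_comm _ _
  calc ‖φ a‖ = ‖φ p₁ - φ p₂ + Complex.I • φ p₃ - Complex.I • φ p₄‖ := by
        rw [hdec]; simp [map_add, map_sub, map_smul]
    _ ≤ ‖φ p₁‖ + ‖φ p₂‖ + ‖φ p₃‖ + ‖φ p₄‖ := by
        calc ‖φ p₁ - φ p₂ + Complex.I • φ p₃ - Complex.I • φ p₄‖
            ≤ ‖φ p₁ - φ p₂ + Complex.I • φ p₃‖ + ‖Complex.I • φ p₄‖ := norm_sub_le _ _
          _ ≤ ‖φ p₁ - φ p₂‖ + ‖Complex.I • φ p₃‖ + ‖Complex.I • φ p₄‖ := by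
              gcongr; exact norm_add_le _ _
          _ ≤ ‖φ p₁‖ + ‖φ p₂‖ + ‖Complex.I • φ p₃‖ + ‖Complex.I • φ p₄‖ := by
              gcongr; exact norm_sub_le _ _
          _ = ‖φ p₁‖ + ‖φ p₂‖ + ‖φ p₃‖ + ‖φ p₄‖ := by
              rw [norm_smul, norm_smul]; simp
    _ ≤ C * ‖a‖ + C * ‖a‖ + C * ‖a‖ + C * ‖a‖ := by
        gcongr <;> [exact bound _ _ e₁ n₁; exact bound _ _ e₂ n₂;
          exact bound _ _ e₃ n₃; exact bound _ _ e₄ n₄]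
    _ = 4 * C * ‖a‖ := by ring

end AuxBound

section AuxSpan

lemma spanDense_ext' {X Y : Type} [NormedAddCommGroup X] [NormedSpace ℂ X]
    [NormedAddCommGroup Y] [NormedSpace ℂ Y] {s : Set X} (hs : spanDense s)
    {f g : X → Y} (hf : Continuous f) (hg : Continuous g)
    (hfa : ∀ x y, f (x + y) = f x + f y) (hfs : ∀ (c : ℂ) x, f (c • x) = c • f x)
    (hga : ∀ x y, g (x + y) = g x + g y) (hgs : ∀ (c : ℂ) x, g (c • x) = c • g x)
    (h : ∀ x ∈ s, f x = g x) (x : X) : f x = g x := by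
  have hf0 : f 0 = 0 := by
    have := hfs 0 0; simpa using this
  have hg0 : g 0 = 0 := by
    have := hgs 0 0; simpa using this
  have hsub : (Submodule.span ℂ s : Set X) ⊆ {x | f x = g x} := by
    intro x hx
    induction hx using Submodule.span_induction with
    | mem x hx => exact h x hx
    | zero => simp [hf0, hg0]
    | add x y _ _ hx hy =>
        show f (x + y) = g (x + y)
        rw [hfa, hga, hx, hy]
    | smul c x _ hx =>
        show f (c • x) = g (c • x)
        rw [hfs, hgs, hx]
  have hx : x ∈ closure (Submodule.span ℂ s : Set X) := by
    rw [← Submodule.topologicalClosure_coe, hs]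
    trivial
  exact closure_minimal hsub (isClosed_eq hf hg) hx

lemma span_products' {A₀ : Type} [NonUnitalCStarAlgebra A₀] (b : A₀) :
    b ∈ Submodule.span ℂ {x : A₀ | ∃ y z : A₀, x = y * z} := by
  obtain ⟨p₁, p₂, p₃, p₄, s₁, s₂, s₃, s₄, e₁, e₂, e₃, e₄, hdec, -⟩ := decomp4' b
  have hp : ∀ (p sp : A₀), p = star sp * sp →
      p ∈ Submodule.span ℂ {x : A₀ | ∃ y z : A₀, x = y * z} := fun p sp hp =>
    Submodule.subset_span ⟨star sp, sp, hp⟩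
  rw [hdec]
  exact sub_mem (add_mem (sub_mem (hp _ _ e₁) (hp _ _ e₂))
    (Submodule.smul_mem _ _ (hp _ _ e₃))) (Submodule.smul_mem _ _ (hp _ _ e₄))

end AuxSpan

namespace Multiplier

variable {A : CStarAlg} (mA : Multiplier A)

lemma incl_cont : Continuous mA.incl := CStarHom.cont' _

lemma ext_incl {m m' : mA.M.carrier} (h : ∀ a, m * mA.incl a = m' * mA.incl a) :
    m = m' := by
  have h0 : ∀ a, (m - m') * mA.incl a = 0 := fun a => by rw [sub_mul, h, sub_self]
  have := mA.essential _ h0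
  rwa [sub_eq_zero] at this

lemma lmul_add (m : mA.M.carrier) (a b : A.carrier) :
    mA.lmul m (a + b) = mA.lmul m a + mA.lmul m b :=
  mA.incl_injective (by rw [map_add, mA.lmul_spec, mA.lmul_spec, mA.lmul_spec, map_add, mul_add])

lemma lmul_smul (m : mA.M.carrier) (c : ℂ) (a : A.carrier) :
    mA.lmul m (c • a) = c • mA.lmul m a :=
  mA.incl_injective (by
    rw [mA.lmul_spec, map_smul, map_smul, mA.lmul_spec, mul_smul_comm])

lemma add_lmul (m m' : mA.M.carrier) (a : A.carrier) :
    mA.lmul (m + m') a = mA.lmul m a + mA.lmul m' a :=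
  mA.incl_injective (by rw [map_add, mA.lmul_spec, mA.lmul_spec, mA.lmul_spec, add_mul])

lemma smul_lmul (c : ℂ) (m : mA.M.carrier) (a : A.carrier) :
    mA.lmul (c • m) a = c • mA.lmul m a :=
  mA.incl_injective (by rw [mA.lmul_spec, map_smul, mA.lmul_spec, smul_mul_assoc])

lemma lmul_lmul (m m' : mA.M.carrier) (a : A.carrier) :
    mA.lmul m (mA.lmul m' a) = mA.lmul (m * m') a :=
  mA.incl_injective (by rw [mA.lmul_spec, mA.lmul_spec, mA.lmul_spec, mul_assoc])

lemma lmul_incl (a b : A.carrier) : mA.lmul (mA.incl a) b = a * b :=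
  mA.incl_injective (by rw [mA.lmul_spec, map_mul])

lemma star_lmul (m : mA.M.carrier) (a : A.carrier) :
    star (mA.lmul m a) = mA.rmul (star a) (star m) :=
  mA.incl_injective (by rw [map_star, mA.lmul_spec, mA.rmul_spec, star_mul, map_star])

lemma rmul_add (a b : A.carrier) (m : mA.M.carrier) :
    mA.rmul (a + b) m = mA.rmul a m + mA.rmul b m :=
  mA.incl_injective (by rw [map_add, mA.rmul_spec, mA.rmul_spec, mA.rmul_spec, map_add, add_mul])

lemma rmul_smul (c : ℂ) (a : A.carrier) (m : mA.M.carrier) :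
    mA.rmul (c • a) m = c • mA.rmul a m :=
  mA.incl_injective (by rw [mA.rmul_spec, map_smul, map_smul, mA.rmul_spec, smul_mul_assoc])

lemma lmul_cont (m : mA.M.carrier) : Continuous (mA.lmul m) := by
  let g : A.carrier →ₗ[ℂ] A.carrier :=
    { toFun := mA.lmul m
      map_add' := mA.lmul_add m
      map_smul' := mA.lmul_smul m }
  have hcl : IsClosed (g.graph : Set (A.carrier × A.carrier)) := by
    have hset : (g.graph : Set (A.carrier × A.carrier))
        = {p | m * mA.incl p.1 = mA.incl p.2} := by
      ext p
      simp only [SetLike.mem_coe, LinearMap.mem_graph_iff, Set.mem_setOf_eq]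
      constructor
      · intro hp
        rw [hp]
        exact (mA.lmul_spec m p.1).symm
      · intro hp
        exact (mA.incl_injective (by
          show mA.incl (mA.lmul m p.1) = mA.incl p.2
          rw [mA.lmul_spec]; exact hp)).symm
    rw [hset]
    exact isClosed_eq (continuous_const.mul (mA.incl_cont.comp continuous_fst))
      (mA.incl_cont.comp continuous_snd)
  exact g.continuous_of_isClosed_graph hcl

lemma lmul_cont_left (a : A.carrier) : Continuous fun m => mA.lmul m a := by
  let g : mA.M.carrier →ₗ[ℂ] A.carrier :=
    { toFun := fun m => mA.lmul m a
      map_add' := fun m m' => mA.add_lmul m m' a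
      map_smul' := fun c m => mA.smul_lmul c m a }
  have hcl : IsClosed (g.graph : Set (mA.M.carrier × A.carrier)) := by
    have hset : (g.graph : Set (mA.M.carrier × A.carrier))
        = {p | p.1 * mA.incl a = mA.incl p.2} := by
      ext p
      simp only [SetLike.mem_coe, LinearMap.mem_graph_iff, Set.mem_setOf_eq]
      constructor
      · intro hp
        rw [hp]
        exact (mA.lmul_spec p.1 a).symm
      · intro hp
        exact (mA.incl_injective (by
          show mA.incl (mA.lmul p.1 a) = mA.incl p.2
          rw [mA.lmul_spec]; exact hp)).symm
    rw [hset]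
    exact isClosed_eq (continuous_fst.mul continuous_const)
      (mA.incl_cont.comp continuous_snd)
  exact g.continuous_of_isClosed_graph hcl

lemma rmul_cont (m : mA.M.carrier) : Continuous fun a => mA.rmul a m := by
  let g : A.carrier →ₗ[ℂ] A.carrier :=
    { toFun := fun a => mA.rmul a m
      map_add' := fun a b => mA.rmul_add a b m
      map_smul' := fun c a => mA.rmul_smul c a m }
  have hcl : IsClosed (g.graph : Set (A.carrier × A.carrier)) := by
    have hset : (g.graph : Set (A.carrier × A.carrier))
        = {p | mA.incl p.1 * m = mA.incl p.2} := by
      ext p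
      simp only [SetLike.mem_coe, LinearMap.mem_graph_iff, Set.mem_setOf_eq]
      constructor
      · intro hp
        rw [hp]
        exact (mA.rmul_spec p.1 m).symm
      · intro hp
        exact (mA.incl_injective (by
          show mA.incl (mA.rmul p.1 m) = mA.incl p.2
          rw [mA.rmul_spec]; exact hp)).symm
    rw [hset]
    exact isClosed_eq ((mA.incl_cont.comp continuous_fst).mul continuous_const)
      (mA.incl_cont.comp continuous_snd)
  exact g.continuous_of_isClosed_graph hcl

lemma ext_denseSpan {s : Set A.carrier} (hs : DenseSpan s) {m m' : mA.M.carrier}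
    (h : ∀ v ∈ s, m * mA.incl v = m' * mA.incl v) : m = m' := by
  refine mA.ext_incl fun a => ?_
  refine spanDense_ext' hs (f := fun v => m * mA.incl v) (g := fun v => m' * mA.incl v)
    (continuous_const.mul mA.incl_cont) (continuous_const.mul mA.incl_cont)
    (fun x y => by show m * mA.incl (x + y) = _; rw [map_add, mul_add])
    (fun c x => by show m * mA.incl (c • x) = _; rw [map_smul, mul_smul_comm])
    (fun x y => by show m' * mA.incl (x + y) = _; rw [map_add, mul_add])
    (fun c x => by show m' * mA.incl (c • x) = _; rw [map_smul, mul_smul_comm])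
    h a

end Multiplier

namespace Tensor

variable {A B : CStarAlg} (T : Tensor A B)

lemma tmul_zero_right (a : A.carrier) : T.tmul a 0 = 0 := by
  calc T.tmul a 0 = T.tmul a ((0:ℂ) • (0 : B.carrier)) := by rw [smul_zero]
    _ = (0:ℂ) • T.tmul a 0 := T.tmul_smul 0 a 0
    _ = 0 := zero_smul _ _

lemma zero_tmul_left (b : B.carrier) : T.tmul 0 b = 0 := by
  calc T.tmul 0 b = T.tmul ((0:ℂ) • (0 : A.carrier)) b := by rw [smul_zero]
    _ = (0:ℂ) • T.tmul 0 b := T.smul_tmul 0 0 b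
    _ = 0 := zero_smul _ _

lemma tmul_sub (a : A.carrier) (b b' : B.carrier) :
    T.tmul a (b - b') = T.tmul a b - T.tmul a b' := by
  have hneg : T.tmul a (-b') = -T.tmul a b' := by
    have := T.tmul_smul (-1 : ℂ) a b'
    simpa using this
  rw [sub_eq_add_neg, T.tmul_add, hneg, sub_eq_add_neg]

lemma tmul_cont_left (b : B.carrier) : Continuous fun a => T.tmul a b := by
  have hsq : ∀ s : B.carrier, Continuous fun a => T.tmul a (star s * s) := by
    intro s
    let φ : A.carrier →ₗ[ℂ] T.T.carrier :=
      { toFun := fun a => T.tmul a (star s * s)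
        map_add' := fun a a' => T.add_tmul a a' _
        map_smul' := fun c a => T.smul_tmul c a _ }
    have hpos : ∀ a : A.carrier, ∃ c : T.T.carrier, φ (star a * a) = star c * c := by
      intro a
      refine ⟨T.tmul a s, ?_⟩
      show T.tmul (star a * a) (star s * s) = star (T.tmul a s) * T.tmul a s
      rw [T.tmul_star, T.tmul_mul]
    obtain ⟨C, hC⟩ := posmap_bound' φ hpos
    exact AddMonoidHomClass.continuous_of_bound φ C hC
  obtain ⟨p₁, p₂, p₃, p₄, s₁, s₂, s₃, s₄, e₁, e₂, e₃, e₄, hdec, -⟩ := decomp4' b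
  have heq : (fun a => T.tmul a b) = fun a =>
      T.tmul a p₁ - T.tmul a p₂ + Complex.I • T.tmul a p₃ - Complex.I • T.tmul a p₄ := by
    funext a
    rw [hdec, T.tmul_sub, T.tmul_add, T.tmul_sub, T.tmul_smul, T.tmul_smul]
  rw [heq, e₁, e₂, e₃, e₄]
  exact (((hsq s₁).sub (hsq s₂)).add ((hsq s₃).const_smul _)).sub ((hsq s₄).const_smul _)

lemma span_pair_dense {D : Set A.carrier} (hD : DenseSpan D) :
    DenseSpan (A := T.T) {x | ∃ d ∈ D, ∃ y z : B.carrier, x = T.tmul d (y * z)} := by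
  set s : Set T.T.carrier := {x | ∃ d ∈ D, ∃ y z : B.carrier, x = T.tmul d (y * z)} with hsdef
  set N := (Submodule.span ℂ s).topologicalClosure with hN
  have step1 : ∀ d ∈ D, ∀ b : B.carrier, T.tmul d b ∈ Submodule.span ℂ s := by
    intro d hd b
    let Md : Submodule ℂ B.carrier :=
      { carrier := {b | T.tmul d b ∈ Submodule.span ℂ s}
        add_mem' := fun {x y} hx hy => by
          show T.tmul d (x + y) ∈ Submodule.span ℂ s
          rw [T.tmul_add]
          exact add_mem hx hy
        zero_mem' := by
          show T.tmul d 0 ∈ Submodule.span ℂ s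
          rw [T.tmul_zero_right]
          exact zero_mem _
        smul_mem' := fun c x hx => by
          show T.tmul d (c • x) ∈ Submodule.span ℂ s
          rw [T.tmul_smul]
          exact Submodule.smul_mem _ _ hx }
    have hprod : {x : B.carrier | ∃ y z : B.carrier, x = y * z} ⊆ Md := by
      rintro x ⟨y, z, rfl⟩
      exact Submodule.subset_span ⟨d, hd, y, z, rfl⟩
    have : b ∈ Md := (Submodule.span_le.mpr hprod) (span_products' b)
    exact this
  have step2 : ∀ (a : A.carrier) (b : B.carrier), T.tmul a b ∈ N := by
    intro a b
    have hclosed : IsClosed {a : A.carrier | T.tmul a b ∈ N} :=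
      IsClosed.preimage (T.tmul_cont_left b) (Submodule.isClosed_topologicalClosure _)
    have hsub : (Submodule.span ℂ D : Set A.carrier) ⊆ {a | T.tmul a b ∈ N} := by
      intro x hx
      induction hx using Submodule.span_induction with
      | mem x hx => exact Submodule.le_topologicalClosure _ (step1 x hx b)
      | zero =>
          show T.tmul 0 b ∈ N
          rw [T.zero_tmul_left]; exact zero_mem N
      | add x y _ _ hx hy =>
          show T.tmul (x + y) b ∈ N
          rw [T.add_tmul]
          exact add_mem hx hy
      | smul c x _ hx =>
          show T.tmul (c • x) b ∈ N
          rw [T.smul_tmul]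
          exact Submodule.smul_mem _ _ hx
    have ha : a ∈ closure (Submodule.span ℂ D : Set A.carrier) := by
      rw [← Submodule.topologicalClosure_coe, hD]
      trivial
    exact closure_minimal hsub hclosed ha
  have step3 : (Submodule.span ℂ {x : T.T.carrier | ∃ a b, x = T.tmul a b}) ≤ N := by
    rw [Submodule.span_le]
    rintro x ⟨a, b, rfl⟩
    exact step2 a b
  have := Submodule.topologicalClosure_minimal _ step3 (Submodule.isClosed_topologicalClosure _)
  have hdense := T.dense
  rw [DenseSpan, spanDense] at hdense
  rw [DenseSpan, spanDense, ← top_le_iff]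
  calc (⊤ : Submodule ℂ T.T.carrier)
      = (Submodule.span ℂ {x : T.T.carrier | ∃ a b, x = T.tmul a b}).topologicalClosure :=
        hdense.symm
    _ ≤ N := this
end Tensor

/-- Let `V` be a regular multiplicative unitary and let
`(δ_A, δ_X, δ_B)` be a right-Hilbert bimodule coaction of `S_V` on `_A X _B` with
associated coaction `δ_K` on `K` and nondegenerate homomorphism `ψ : A → M(K)`.
Then `ψ × Ŝ : A × Ŝ → M(K × Ŝ)` is equivariant for the dual coactions `δ̂_A` and
`δ̂_K` of `(Ŝ_V)_p`, i.e.
`((ψ×Ŝ) ⊗ id) ∘ δ̂_A (j_A(a)μ_A(y)) = δ̂_K ∘ (ψ×Ŝ) (j_A(a)μ_A(y))` for all `a`, `y`;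
consequently `(δ̂_A, δ̂_X, δ̂_B)` together with `ψ × Ŝ` is a right-Hilbert bimodule
coaction of `(Ŝ_V)_p` on `_A X _B × Ŝ`. -/
theorem dual_coaction_equivariance
    (V : MultUnitary)
    -- the full dual Hopf C*-algebra `((Ŝ_V)_p, δ̂_V)`
    (Hp : HopfCStar)
    {A K : CStarAlg}
    (mK : Multiplier K)
    (dA : Coaction V.hopfS A) (dK : Coaction V.hopfS K)
    (eq : EquivHom mK dA dK)
    -- the full crossed products by `Ŝ_V`
    (cpA : FullCP Hp.S dA) (cpK : FullCP Hp.S dK)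
    -- the dual coaction `δ̂_A` of `(Ŝ_V)_p` on `A × Ŝ`, characterized by
    -- `δ̂_A(j(a)μ(y)) = (j(a) ⊗ 1)(μ ⊗ id)(δ̂_V(y))`
    (dualA : Coaction Hp cpA.C)
    (muTensA : CStarHom Hp.SS.T dualA.mAS.M)
    (muTensA_spec : ∀ y z c w,
      muTensA (Hp.SS.tmul y z) * dualA.mAS.incl (dualA.AS.tmul c w)
        = dualA.mAS.incl (dualA.AS.tmul (cpA.mC.lmul (cpA.mu.toHom y) c) (z * w)))
    (muTensABar : CStarHom Hp.mSS.M dualA.mAS.M)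
    (muTensABar_spec : ∀ m u, muTensABar m * muTensA u = muTensA (Hp.mSS.lmul m u))
    (jTensOneA : CStarHom cpA.mC.M dualA.mAS.M)
    (jTensOneA_spec : ∀ m c w,
      jTensOneA m * dualA.mAS.incl (dualA.AS.tmul c w)
        = dualA.mAS.incl (dualA.AS.tmul (cpA.mC.lmul m c) w))
    (dualA_spec : ∀ a y,
      dualA.coact.toHom (cpA.gen a y)
        = jTensOneA (cpA.j.toHom a) * muTensABar (Hp.comul.toHom y))
    -- the dual coaction `δ̂_K` of `(Ŝ_V)_p` on `K × Ŝ`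
    (dualK : Coaction Hp cpK.C)
    (muTensK : CStarHom Hp.SS.T dualK.mAS.M)
    (muTensK_spec : ∀ y z c w,
      muTensK (Hp.SS.tmul y z) * dualK.mAS.incl (dualK.AS.tmul c w)
        = dualK.mAS.incl (dualK.AS.tmul (cpK.mC.lmul (cpK.mu.toHom y) c) (z * w)))
    (muTensKBar : CStarHom Hp.mSS.M dualK.mAS.M)
    (muTensKBar_spec : ∀ m u, muTensKBar m * muTensK u = muTensK (Hp.mSS.lmul m u))
    (jTensOneK : CStarHom cpK.mC.M dualK.mAS.M)
    (jTensOneK_spec : ∀ m c w,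
      jTensOneK m * dualK.mAS.incl (dualK.AS.tmul c w)
        = dualK.mAS.incl (dualK.AS.tmul (cpK.mC.lmul m c) w))
    (dualK_spec : ∀ a y,
      dualK.coact.toHom (cpK.gen a y)
        = jTensOneK (cpK.j.toHom a) * muTensKBar (Hp.comul.toHom y))
    -- `ψ × Ŝ : A × Ŝ → M(K × Ŝ)`
    (jbar : CStarHom mK.M cpK.mC.M)
    (jbar_incl : ∀ k, jbar (mK.incl k) = cpK.j.toHom k)
    (psiCP : NDHom cpA.C cpK.C cpK.mC)
    (psiCP_gen : ∀ a y,
      psiCP.toHom (cpA.gen a y) = jbar (eq.psi.toHom a) * cpK.mu.toHom y)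
    -- `(ψ×Ŝ) ⊗ id : (A×Ŝ) ⊗ (Ŝ_V)_p → M((K×Ŝ) ⊗ (Ŝ_V)_p)` and its extension
    (psiCPTens : CStarHom dualA.AS.T dualK.mAS.M)
    (psiCPTens_spec : ∀ x y k w,
      psiCPTens (dualA.AS.tmul x y) * dualK.mAS.incl (dualK.AS.tmul k w)
        = dualK.mAS.incl (dualK.AS.tmul (cpK.mC.lmul (psiCP.toHom x) k) (y * w)))
    (psiCPTensBar : CStarHom dualA.mAS.M dualK.mAS.M)
    (psiCPTensBar_spec : ∀ m u,
      psiCPTensBar m * psiCPTens u = psiCPTens (dualA.mAS.lmul m u))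
    -- the canonical extension of `δ̂_K` to `M(K × Ŝ)`
    (dualKbar : CStarHom cpK.mC.M dualK.mAS.M)
    (dualKbar_spec : ∀ m x,
      dualKbar m * dualK.coact.toHom x = dualK.coact.toHom (cpK.mC.lmul m x)) :
    (∀ a y, psiCPTensBar (dualA.coact.toHom (cpA.gen a y))
        = dualKbar (psiCP.toHom (cpA.gen a y)))
    ∧ ∃ eh : EquivHom cpK.mC dualA dualK, eh.psi = psiCP := by
  classical
  -- ### generator multiplication formulas
  have genA_j : ∀ (a a' : A.carrier) (y' : Hp.S.carrier),
      cpA.mC.lmul (cpA.j.toHom a) (cpA.gen a' y') = cpA.gen (a * a') y' := by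
    intro a a' y'
    apply cpA.mC.incl_injective
    rw [cpA.mC.lmul_spec, cpA.gen_spec, cpA.gen_spec, ← mul_assoc, ← map_mul]
  have jbar_mul : ∀ (a : A.carrier) (k : K.carrier),
      jbar (eq.psi.toHom a) * cpK.j.toHom k = cpK.j.toHom (mK.lmul (eq.psi.toHom a) k) := by
    intro a k
    rw [← jbar_incl k, ← jbar_incl (mK.lmul (eq.psi.toHom a) k), ← map_mul]
    congr 1
    rw [mK.lmul_spec]
  have genK_jbar : ∀ (a : A.carrier) (k : K.carrier) (z : Hp.S.carrier),
      cpK.mC.lmul (jbar (eq.psi.toHom a)) (cpK.gen k z)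
        = cpK.gen (mK.lmul (eq.psi.toHom a) k) z := by
    intro a k z
    apply cpK.mC.incl_injective
    rw [cpK.mC.lmul_spec, cpK.gen_spec, cpK.gen_spec, ← mul_assoc, jbar_mul]
  have genK_mu : ∀ (k : K.carrier) (z y : Hp.S.carrier),
      cpK.mC.rmul (cpK.gen k z) (cpK.mu.toHom y) = cpK.gen k (z * y) := by
    intro k z y
    apply cpK.mC.incl_injective
    rw [cpK.mC.rmul_spec, cpK.gen_spec, cpK.gen_spec, mul_assoc, ← map_mul]
  -- ### intertwining of psiCP with j and mu (C6, C7, C4)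
  have C6 : ∀ (a : A.carrier) (c : cpA.C.carrier),
      psiCP.toHom (cpA.mC.lmul (cpA.j.toHom a) c)
        = jbar (eq.psi.toHom a) * psiCP.toHom c := by
    intro a c
    refine spanDense_ext' cpA.dense
      (f := fun c => psiCP.toHom (cpA.mC.lmul (cpA.j.toHom a) c))
      (g := fun c => jbar (eq.psi.toHom a) * psiCP.toHom c)
      ((CStarHom.cont' _).comp (cpA.mC.lmul_cont _))
      (continuous_const.mul (CStarHom.cont' _))
      (fun x y => by beta_reduce; rw [cpA.mC.lmul_add, map_add])
      (fun cc x => by beta_reduce; rw [cpA.mC.lmul_smul, map_smul])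
      (fun x y => by beta_reduce; rw [map_add, mul_add])
      (fun cc x => by beta_reduce; rw [map_smul, mul_smul_comm])
      ?_ c
    rintro x ⟨a', y', rfl⟩
    beta_reduce
    rw [genA_j, psiCP_gen, psiCP_gen, map_mul, map_mul, mul_assoc]
  have C7 : ∀ (y : Hp.S.carrier) (c : cpA.C.carrier),
      psiCP.toHom (cpA.mC.rmul c (cpA.mu.toHom y))
        = psiCP.toHom c * cpK.mu.toHom y := by
    intro y c
    refine spanDense_ext' cpA.dense
      (f := fun c => psiCP.toHom (cpA.mC.rmul c (cpA.mu.toHom y)))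
      (g := fun c => psiCP.toHom c * cpK.mu.toHom y)
      ((CStarHom.cont' _).comp (cpA.mC.rmul_cont _))
      ((CStarHom.cont' _).mul continuous_const)
      (fun x y' => by beta_reduce; rw [cpA.mC.rmul_add, map_add])
      (fun cc x => by beta_reduce; rw [cpA.mC.rmul_smul, map_smul])
      (fun x y' => by beta_reduce; rw [map_add, add_mul])
      (fun cc x => by beta_reduce; rw [map_smul, smul_mul_assoc])
      ?_ c
    rintro x ⟨a', y', rfl⟩
    beta_reduce
    have : cpA.mC.rmul (cpA.gen a' y') (cpA.mu.toHom y) = cpA.gen a' (y' * y) := by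
      apply cpA.mC.incl_injective
      rw [cpA.mC.rmul_spec, cpA.gen_spec, cpA.gen_spec, mul_assoc, ← map_mul]
    rw [this, psiCP_gen, psiCP_gen, map_mul, mul_assoc]
  have C4 : ∀ (p : Hp.S.carrier) (x : cpA.C.carrier),
      psiCP.toHom (cpA.mC.lmul (cpA.mu.toHom p) x)
        = cpK.mu.toHom p * psiCP.toHom x := by
    intro p x
    have h1 : cpA.mC.lmul (cpA.mu.toHom p) x
        = star (cpA.mC.rmul (star x) (cpA.mu.toHom (star p))) := by
      apply cpA.mC.incl_injective
      rw [cpA.mC.lmul_spec, map_star, cpA.mC.rmul_spec, star_mul, map_star, map_star,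
        star_star, star_star]
    rw [h1, map_star, C7, star_mul, map_star, map_star, star_star, star_star]
  -- ### multiplier-extension principles in M((K×Ŝ)⊗Ŝp)
  have extElem : ∀ {m m' : dualK.mAS.M.carrier},
      (∀ c w, m * dualK.mAS.incl (dualK.AS.tmul c w)
        = m' * dualK.mAS.incl (dualK.AS.tmul c w)) → m = m' := by
    intro m m' h
    refine dualK.mAS.ext_denseSpan dualK.AS.dense ?_
    rintro v ⟨c, w, rfl⟩
    exact h c w
  have extCoact : ∀ {m m' : dualK.mAS.M.carrier},
      (∀ x, m * dualK.coact.toHom x = m' * dualK.coact.toHom x) → m = m' := by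
    intro m m' h
    refine dualK.mAS.ext_denseSpan dualK.coact.nondeg ?_
    rintro v ⟨x, u, rfl⟩
    rw [dualK.mAS.lmul_spec, ← mul_assoc, ← mul_assoc, h]
  have extCoactR : ∀ {m m' : dualK.mAS.M.carrier},
      (∀ x, dualK.coact.toHom x * m = dualK.coact.toHom x * m') → m = m' := by
    intro m m' h
    have hs : ∀ x, star m * dualK.coact.toHom x = star m' * dualK.coact.toHom x := by
      intro x
      have h2 := congrArg star (h (star x))
      rw [star_mul, star_mul, map_star, star_star] at h2
      exact h2
    have h3 := extCoact hs
    calc m = star (star m) := (star_star m).symm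
      _ = star (star m') := by rw [h3]
      _ = m' := star_star m'
  have extPsi : ∀ {m m' : dualK.mAS.M.carrier},
      (∀ u, m * psiCPTens u = m' * psiCPTens u) → m = m' := by
    intro m m' h
    refine dualK.mAS.ext_denseSpan (dualK.AS.span_pair_dense psiCP.nondeg) ?_
    rintro v ⟨d, ⟨x₁, c, rfl⟩, y₁, w, rfl⟩
    have hv : dualK.mAS.incl (dualK.AS.tmul (cpK.mC.lmul (psiCP.toHom x₁) c) (y₁ * w))
        = psiCPTens (dualA.AS.tmul x₁ y₁) * dualK.mAS.incl (dualK.AS.tmul c w) :=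
      (psiCPTens_spec x₁ y₁ c w).symm
    rw [hv, ← mul_assoc, ← mul_assoc, h]
  -- ### the right multiplication rule for the extended dual coaction
  have rmulRule : ∀ (x : cpK.C.carrier) (m : cpK.mC.M.carrier),
      dualK.coact.toHom x * dualKbar m = dualK.coact.toHom (cpK.mC.rmul x m) := by
    intro x m
    have h1 : star (dualK.coact.toHom x * dualKbar m)
        = dualK.coact.toHom (cpK.mC.lmul (star m) (star x)) := by
      rw [star_mul, ← map_star, ← map_star, dualKbar_spec]
    have h2 := congrArg star h1
    rw [star_star, ← map_star, cpK.mC.star_lmul, star_star, star_star] at h2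
    exact h2
  -- ### L3 and L4 : dualKbar on the canonical multipliers
  have L3 : ∀ a : A.carrier,
      dualKbar (jbar (eq.psi.toHom a)) = jTensOneK (jbar (eq.psi.toHom a)) := by
    intro a
    refine extCoact fun x => ?_
    rw [dualKbar_spec]
    refine spanDense_ext' cpK.dense
      (f := fun x => dualK.coact.toHom (cpK.mC.lmul (jbar (eq.psi.toHom a)) x))
      (g := fun x => jTensOneK (jbar (eq.psi.toHom a)) * dualK.coact.toHom x)
      ((CStarHom.cont' _).comp (cpK.mC.lmul_cont _))
      (continuous_const.mul (CStarHom.cont' _))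
      (fun x y => by beta_reduce; rw [cpK.mC.lmul_add, map_add])
      (fun cc x => by beta_reduce; rw [cpK.mC.lmul_smul, map_smul])
      (fun x y => by beta_reduce; rw [map_add, mul_add])
      (fun cc x => by beta_reduce; rw [map_smul, mul_smul_comm])
      ?_ x
    rintro x ⟨k, z, rfl⟩
    beta_reduce
    rw [genK_jbar, dualK_spec, dualK_spec, ← mul_assoc, ← jbar_mul, map_mul]
  have L4 : ∀ y : Hp.S.carrier,
      dualKbar (cpK.mu.toHom y) = muTensKBar (Hp.comul.toHom y) := by
    intro y
    refine extCoactR fun x => ?_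
    rw [rmulRule]
    refine spanDense_ext' cpK.dense
      (f := fun x => dualK.coact.toHom (cpK.mC.rmul x (cpK.mu.toHom y)))
      (g := fun x => dualK.coact.toHom x * muTensKBar (Hp.comul.toHom y))
      ((CStarHom.cont' _).comp (cpK.mC.rmul_cont _))
      ((CStarHom.cont' _).mul continuous_const)
      (fun x y' => by beta_reduce; rw [cpK.mC.rmul_add, map_add])
      (fun cc x => by beta_reduce; rw [cpK.mC.rmul_smul, map_smul])
      (fun x y' => by beta_reduce; rw [map_add, add_mul])
      (fun cc x => by beta_reduce; rw [map_smul, smul_mul_assoc])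
      ?_ x
    rintro x ⟨k, z, rfl⟩
    beta_reduce
    rw [genK_mu, dualK_spec, dualK_spec, map_mul, map_mul, mul_assoc]
  -- ### elementary lmul formulas in (A×Ŝ)⊗Ŝp
  have S8j : ∀ (m : cpA.mC.M.carrier) (x₁ : cpA.C.carrier) (y₁ : Hp.S.carrier),
      dualA.mAS.lmul (jTensOneA m) (dualA.AS.tmul x₁ y₁)
        = dualA.AS.tmul (cpA.mC.lmul m x₁) y₁ := by
    intro m x₁ y₁
    apply dualA.mAS.incl_injective
    rw [dualA.mAS.lmul_spec, jTensOneA_spec]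
  have S8mu : ∀ (p q : Hp.S.carrier) (x₂ : cpA.C.carrier) (w₂ : Hp.S.carrier),
      dualA.mAS.lmul (muTensA (Hp.SS.tmul p q)) (dualA.AS.tmul x₂ w₂)
        = dualA.AS.tmul (cpA.mC.lmul (cpA.mu.toHom p) x₂) (q * w₂) := by
    intro p q x₂ w₂
    apply dualA.mAS.incl_injective
    rw [dualA.mAS.lmul_spec, muTensA_spec]
  have S8one : ∀ (s : Hp.S.carrier) (x₁ : cpA.C.carrier) (y₁ : Hp.S.carrier),
      dualA.mAS.lmul (dualA.oneTens s) (dualA.AS.tmul x₁ y₁)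
        = dualA.AS.tmul x₁ (s * y₁) := by
    intro s x₁ y₁
    apply dualA.mAS.incl_injective
    rw [dualA.mAS.lmul_spec, dualA.oneTens_tmul]
  -- ### S11c : muTensK versus psiCPTens on elementary tensors
  have S11c : ∀ (τ : Hp.SS.T.carrier) (x₂ : cpA.C.carrier) (w₂ : Hp.S.carrier),
      muTensK τ * psiCPTens (dualA.AS.tmul x₂ w₂)
        = psiCPTens (dualA.mAS.lmul (muTensA τ) (dualA.AS.tmul x₂ w₂)) := by
    intro τ x₂ w₂
    refine spanDense_ext' Hp.SS.dense
      (f := fun τ => muTensK τ * psiCPTens (dualA.AS.tmul x₂ w₂))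
      (g := fun τ => psiCPTens (dualA.mAS.lmul (muTensA τ) (dualA.AS.tmul x₂ w₂)))
      ((CStarHom.cont' _).mul continuous_const)
      ((CStarHom.cont' _).comp ((dualA.mAS.lmul_cont_left _).comp (CStarHom.cont' _)))
      (fun x y => by beta_reduce; rw [map_add, add_mul])
      (fun cc x => by beta_reduce; rw [map_smul, smul_mul_assoc])
      (fun x y => by beta_reduce; rw [map_add, dualA.mAS.add_lmul, map_add])
      (fun cc x => by beta_reduce; rw [map_smul, dualA.mAS.smul_lmul, map_smul])
      ?_ τ
    rintro τ' ⟨p, q, rfl⟩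
    beta_reduce
    refine extElem fun c w => ?_
    rw [mul_assoc, psiCPTens_spec, muTensK_spec, S8mu, psiCPTens_spec, C4,
      ← cpK.mC.lmul_lmul, mul_assoc]
  -- ### L2' and L1'
  have L2' : ∀ (y : Hp.S.carrier) (u : dualA.AS.T.carrier),
      muTensKBar (Hp.comul.toHom y) * psiCPTens u
        = psiCPTens (dualA.mAS.lmul (muTensABar (Hp.comul.toHom y)) u) := by
    intro y u
    refine spanDense_ext' (dualA.AS.span_pair_dense cpA.mu.nondeg)
      (f := fun u => muTensKBar (Hp.comul.toHom y) * psiCPTens u)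
      (g := fun u => psiCPTens (dualA.mAS.lmul (muTensABar (Hp.comul.toHom y)) u))
      (continuous_const.mul (CStarHom.cont' _))
      ((CStarHom.cont' _).comp (dualA.mAS.lmul_cont _))
      (fun x y' => by beta_reduce; rw [map_add, mul_add])
      (fun cc x => by beta_reduce; rw [map_smul, mul_smul_comm])
      (fun x y' => by beta_reduce; rw [dualA.mAS.lmul_add, map_add])
      (fun cc x => by beta_reduce; rw [dualA.mAS.lmul_smul, map_smul])
      ?_ u
    rintro u ⟨d, ⟨p, x₂, rfl⟩, y₁, z₁, rfl⟩
    beta_reduce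
    rw [← S8mu p y₁ x₂ z₁, ← S11c, ← mul_assoc, muTensKBar_spec, S11c,
      dualA.mAS.lmul_lmul, muTensABar_spec]
  have L1' : ∀ (a : A.carrier) (u : dualA.AS.T.carrier),
      jTensOneK (jbar (eq.psi.toHom a)) * psiCPTens u
        = psiCPTens (dualA.mAS.lmul (jTensOneA (cpA.j.toHom a)) u) := by
    intro a u
    refine spanDense_ext' dualA.AS.dense
      (f := fun u => jTensOneK (jbar (eq.psi.toHom a)) * psiCPTens u)
      (g := fun u => psiCPTens (dualA.mAS.lmul (jTensOneA (cpA.j.toHom a)) u))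
      (continuous_const.mul (CStarHom.cont' _))
      ((CStarHom.cont' _).comp (dualA.mAS.lmul_cont _))
      (fun x y' => by beta_reduce; rw [map_add, mul_add])
      (fun cc x => by beta_reduce; rw [map_smul, mul_smul_comm])
      (fun x y' => by beta_reduce; rw [dualA.mAS.lmul_add, map_add])
      (fun cc x => by beta_reduce; rw [dualA.mAS.lmul_smul, map_smul])
      ?_ u
    rintro u ⟨x₁, y₁, rfl⟩
    beta_reduce
    refine extElem fun c w => ?_
    rw [mul_assoc, psiCPTens_spec, jTensOneK_spec, S8j, psiCPTens_spec, C6,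
      ← cpK.mC.lmul_lmul]
  -- ### B2 at generators, and the main identity E1
  have B2g : ∀ (a : A.carrier) (y : Hp.S.carrier) (u : dualA.AS.T.carrier),
      dualKbar (psiCP.toHom (cpA.gen a y)) * psiCPTens u
        = psiCPTens (dualA.mAS.lmul (dualA.coact.toHom (cpA.gen a y)) u) := by
    intro a y u
    rw [psiCP_gen, map_mul, L3, L4, mul_assoc, L2', L1', dualA.mAS.lmul_lmul, ← dualA_spec]
  have E1 : ∀ (a : A.carrier) (y : Hp.S.carrier),
      psiCPTensBar (dualA.coact.toHom (cpA.gen a y))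
        = dualKbar (psiCP.toHom (cpA.gen a y)) := by
    intro a y
    refine extPsi fun u => ?_
    rw [psiCPTensBar_spec, B2g]
  -- ### B2 for all elements
  have B2 : ∀ (x : cpA.C.carrier) (u : dualA.AS.T.carrier),
      dualKbar (psiCP.toHom x) * psiCPTens u
        = psiCPTens (dualA.mAS.lmul (dualA.coact.toHom x) u) := by
    intro x u
    refine spanDense_ext' cpA.dense
      (f := fun x => dualKbar (psiCP.toHom x) * psiCPTens u)
      (g := fun x => psiCPTens (dualA.mAS.lmul (dualA.coact.toHom x) u))
      (((CStarHom.cont' _).comp (CStarHom.cont' _)).mul continuous_const)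
      ((CStarHom.cont' _).comp ((dualA.mAS.lmul_cont_left _).comp (CStarHom.cont' _)))
      (fun x y => by beta_reduce; rw [map_add, map_add, add_mul])
      (fun cc x => by beta_reduce; rw [map_smul, map_smul, smul_mul_assoc])
      (fun x y => by beta_reduce; rw [map_add, dualA.mAS.add_lmul, map_add])
      (fun cc x => by beta_reduce; rw [map_smul, dualA.mAS.smul_lmul, map_smul])
      ?_ x
    rintro x ⟨a, y, rfl⟩
    beta_reduce
    exact B2g a y u
  -- ### C10 : oneTens versus psiCPTens
  have C10 : ∀ (s : Hp.S.carrier) (u : dualA.AS.T.carrier),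
      dualK.oneTens s * psiCPTens u
        = psiCPTens (dualA.mAS.lmul (dualA.oneTens s) u) := by
    intro s u
    refine spanDense_ext' dualA.AS.dense
      (f := fun u => dualK.oneTens s * psiCPTens u)
      (g := fun u => psiCPTens (dualA.mAS.lmul (dualA.oneTens s) u))
      (continuous_const.mul (CStarHom.cont' _))
      ((CStarHom.cont' _).comp (dualA.mAS.lmul_cont _))
      (fun x y' => by beta_reduce; rw [map_add, mul_add])
      (fun cc x => by beta_reduce; rw [map_smul, mul_smul_comm])
      (fun x y' => by beta_reduce; rw [dualA.mAS.lmul_add, map_add])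
      (fun cc x => by beta_reduce; rw [dualA.mAS.lmul_smul, map_smul])
      ?_ u
    rintro u ⟨x₁, y₁, rfl⟩
    beta_reduce
    refine extElem fun c w => ?_
    rw [mul_assoc, psiCPTens_spec, dualK.oneTens_tmul, S8one, psiCPTens_spec, mul_assoc]
  -- ### E2' and equivariance
  have E2' : ∀ (x : cpA.C.carrier) (s : Hp.S.carrier),
      dualKbar (psiCP.toHom x) * dualK.oneTens s = psiCPTens (dualA.lam x s) := by
    intro x s
    refine extPsi fun u => ?_
    rw [mul_assoc, C10, B2, dualA.mAS.lmul_lmul, ← dualA.lam_spec,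
      dualA.mAS.lmul_incl, map_mul]
  have equiv : ∀ (x : cpA.C.carrier) (b : cpK.C.carrier) (s : Hp.S.carrier),
      dualK.coact.toHom (cpK.mC.rmul b (psiCP.toHom x)) * dualK.oneTens s
        = dualK.coact.toHom b * psiCPTens (dualA.lam x s) := by
    intro x b s
    rw [← rmulRule, mul_assoc, E2']
  exact ⟨fun a y => E1 a y,
    ⟨{ psi := psiCP, psiTens := psiCPTens, psiTens_spec := psiCPTens_spec,
       equivariant := equiv }, rfl⟩⟩
end
end

section
/- Let (δ_A,δ_X,δ_B) be an imprimitivity bimodule coaction of a Hopf C*-algebra S on an A–B imprimitivity bimodule X, and let δ_L be the associated coaction on the linking algebra L = L(X). If δ_A and δ_B are effective, then δ_L is effective. -/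
/-!
Common axiomatic framework for formalizing Kaliszewski–Quigg,
"Equivariance and Imprimitivity for Discrete Hopf C*-Coactions".

Since Mathlib contains neither spatial tensor products of C*-algebras, multiplier
algebras realized abstractly, Hilbert C*-module tensor products, nor crossed
products by Hopf C*-coactions, all of these constructions are axiomatized below as
*realizations*: bundled data satisfying the characteristic algebraic identities of
the corresponding analytic objects.
-/

noncomputable section

open scoped ComplexOrder

/-! ### Auxiliary machinery for Statement 11 -/

section Statement11Aux

open scoped ComplexStarModule

/-- Induction principle for dense spans. -/
lemma spanDense_ind {E : Type} [NormedAddCommGroup E] [NormedSpace ℂ E]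
    {s : Set E} (hs : spanDense s) (P : E → Prop)
    (hW : IsClosed {x : E | P x})
    (h0 : P 0)
    (hadd : ∀ x y, P x → P y → P (x + y))
    (hsmul : ∀ (c : ℂ) (x), P x → P (c • x))
    (hsub : ∀ x ∈ s, P x) (x : E) : P x := by
  let Q : Submodule ℂ E :=
    { carrier := {x : E | P x}
      add_mem' := fun hx hy => hadd _ _ hx hy
      zero_mem' := h0
      smul_mem' := fun c y hy => hsmul c y hy }
  have h1 : Submodule.span ℂ s ≤ Q := Submodule.span_le.mpr hsub
  have h2 : (Submodule.span ℂ s).topologicalClosure ≤ Q :=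
    Submodule.topologicalClosure_minimal _ h1 hW
  rw [hs] at h2
  exact h2 Submodule.mem_top

lemma continuous_of_add_bound {E F : Type} [NormedAddCommGroup E] [NormedAddCommGroup F]
    (f : E → F) (hadd : ∀ x y, f (x + y) = f x + f y) (C : ℝ)
    (hb : ∀ x, ‖f x‖ ≤ C * ‖x‖) : Continuous f :=
  AddMonoidHomClass.continuous_of_bound (AddMonoidHom.mk' f hadd) C hb

lemma CStarHom.cont {A B : CStarAlg} (f : CStarHom A B) : Continuous f :=
  continuous_of_add_bound f (map_add f) 1
    (fun x => by simpa using NonUnitalStarAlgHom.norm_apply_le f x)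

lemma CStarHom.norm_map_of_injective {A B : CStarAlg} (f : CStarHom A B)
    (hf : Function.Injective f) (x : A.carrier) : ‖f x‖ = ‖x‖ :=
  NonUnitalStarAlgHom.norm_map f hf x

lemma sq_eq_of_nonneg {a b : ℝ} (ha : 0 ≤ a) (hb : 0 ≤ b) (h : a * a = b * b) : a = b := by
  rcases mul_self_eq_mul_self_iff.mp h with h' | h'
  · exact h'
  · linarith

section CFCFacts

variable {A : Type} [NonUnitalCStarAlgebra A]

lemma quasi_le_norm (x : A) {t : ℝ} (ht : t ∈ quasispectrum ℝ x) : t ≤ ‖x‖ := by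
  rw [Unitization.quasispectrum_eq_spectrum_inr' ℝ ℂ] at ht
  have h := spectrum.norm_le_norm_of_mem ht
  rw [Unitization.norm_inr] at h
  calc t ≤ |t| := le_abs_self t
  _ ≤ ‖x‖ := h

lemma quasi_nonneg_star_mul_self (a : A) : ∀ t ∈ quasispectrum ℝ (star a * a), 0 ≤ t := by
  intro t ht
  rw [Unitization.quasispectrum_eq_spectrum_inr' ℝ ℂ, Unitization.inr_mul,
    Unitization.inr_star] at ht
  exact spectrum_star_mul_self_nonneg t ht

lemma sqrt_cont : Continuous (fun t : ℝ => Real.sqrt t) := Real.continuous_sqrt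

lemma sqrt_mul_self_of_quasi (x : A) (hx : IsSelfAdjoint x)
    (hq : ∀ t ∈ quasispectrum ℝ x, 0 ≤ t) :
    cfcₙ Real.sqrt x * cfcₙ Real.sqrt x = x := by
  rw [← cfcₙ_mul Real.sqrt Real.sqrt x sqrt_cont.continuousOn (by simp)
      sqrt_cont.continuousOn (by simp)]
  calc cfcₙ (fun t : ℝ => Real.sqrt t * Real.sqrt t) x
      = cfcₙ (id : ℝ → ℝ) x := cfcₙ_congr (fun t ht => Real.mul_self_sqrt (hq t ht))
    _ = x := cfcₙ_id ℝ x hx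

/-- The spectral partial order, transported to a possibly non-unital C*-algebra. -/
noncomputable def cstarPO (A : Type) [NonUnitalCStarAlgebra A] : PartialOrder A :=
  letI := CStarAlgebra.spectralOrder (Unitization ℂ A)
  PartialOrder.lift (Unitization.inr : A → Unitization ℂ A) Unitization.inr_injective

lemma cstarSOR (A : Type) [NonUnitalCStarAlgebra A] :
    @StarOrderedRing A _ (cstarPO A) _ := by
  letI po1 := CStarAlgebra.spectralOrder (Unitization ℂ A)
  haveI sor1 := CStarAlgebra.spectralOrderedRing (Unitization ℂ A)
  letI := cstarPO A
  refine StarOrderedRing.of_nonneg_iff' ?_ ?_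
  · intro x y hxy z
    show ((z + x : A) : Unitization ℂ A) ≤ ((z + y : A) : Unitization ℂ A)
    rw [Unitization.inr_add, Unitization.inr_add]
    have hxy' : (x : Unitization ℂ A) ≤ (y : Unitization ℂ A) := hxy
    obtain ⟨p, hp, hyp⟩ := (StarOrderedRing.le_iff _ _).mp hxy'
    exact (StarOrderedRing.le_iff _ _).mpr ⟨p, hp, by rw [hyp, add_assoc]⟩
  · intro x
    constructor
    · intro hx
      have hx' : ((0 : A) : Unitization ℂ A) ≤ (x : Unitization ℂ A) := hx
      rw [Unitization.inr_zero] at hx'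
      obtain ⟨hsa, hsp⟩ := hx'
      rw [sub_zero] at hsa hsp
      have hsaA : IsSelfAdjoint x := (Unitization.isSelfAdjoint_inr (R := ℂ)).mp hsa
      have hq : ∀ t ∈ quasispectrum ℝ x, 0 ≤ t := by
        intro t ht
        rw [Unitization.quasispectrum_eq_spectrum_inr' ℝ ℂ] at ht
        exact (SpectrumRestricts.nnreal_iff.mp hsp) t ht
      refine ⟨cfcₙ Real.sqrt x, ?_⟩
      rw [(cfcₙ_predicate Real.sqrt x : IsSelfAdjoint _).star_eq,
        sqrt_mul_self_of_quasi x hsaA hq]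
    · rintro ⟨s, rfl⟩
      show ((0 : A) : Unitization ℂ A) ≤ ((star s * s : A) : Unitization ℂ A)
      rw [Unitization.inr_zero, Unitization.inr_mul, Unitization.inr_star]
      exact star_mul_self_nonneg _

/-- Every element of a C*-algebra lies in the span of products. -/
lemma mem_span_mul' (x : A) (hx : IsSelfAdjoint x) :
    x ∈ Submodule.span ℂ {y : A | ∃ a b : A, y = a * b} := by
  have cpos : Continuous (fun t : ℝ => Real.sqrt (max t 0)) :=
    Real.continuous_sqrt.comp (continuous_id.max continuous_const)
  have cneg : Continuous (fun t : ℝ => Real.sqrt (max (-t) 0)) :=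
    Real.continuous_sqrt.comp (continuous_neg.max continuous_const)
  have key : cfcₙ (fun t : ℝ => Real.sqrt (max t 0)) x * cfcₙ (fun t : ℝ => Real.sqrt (max t 0)) x
      - cfcₙ (fun t : ℝ => Real.sqrt (max (-t) 0)) x * cfcₙ (fun t : ℝ => Real.sqrt (max (-t) 0)) x
      = x := by
    rw [← cfcₙ_mul _ _ x cpos.continuousOn (by simp) cpos.continuousOn (by simp),
      ← cfcₙ_mul _ _ x cneg.continuousOn (by simp) cneg.continuousOn (by simp),
      ← cfcₙ_sub (fun t : ℝ => Real.sqrt (max t 0) * Real.sqrt (max t 0))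
          (fun t : ℝ => Real.sqrt (max (-t) 0) * Real.sqrt (max (-t) 0)) x ((cpos.mul cpos).continuousOn) (by simp)
        ((cneg.mul cneg).continuousOn) (by simp)]
    calc cfcₙ (fun t : ℝ => Real.sqrt (max t 0) * Real.sqrt (max t 0)
            - Real.sqrt (max (-t) 0) * Real.sqrt (max (-t) 0)) x
        = cfcₙ (id : ℝ → ℝ) x := by
          refine cfcₙ_congr (fun t _ => ?_)
          rw [Real.mul_self_sqrt (le_max_right _ _), Real.mul_self_sqrt (le_max_right _ _)]
          simp [id, max_zero_sub_max_neg_zero_eq_self]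
      _ = x := cfcₙ_id ℝ x hx
  rw [← key]
  exact sub_mem (Submodule.subset_span ⟨_, _, rfl⟩) (Submodule.subset_span ⟨_, _, rfl⟩)

end CFCFacts

lemma mem_span_mul (A : CStarAlg) (x : A.carrier) :
    x ∈ Submodule.span ℂ {y : A.carrier | ∃ a b : A.carrier, y = a * b} := by
  have hx := realPart_add_I_smul_imaginaryPart x
  rw [← hx]
  exact Submodule.add_mem _ (mem_span_mul' _ (ℜ x).2)
    (Submodule.smul_mem _ Complex.I (mem_span_mul' _ (ℑ x).2))

lemma mul_spanDense (A : CStarAlg) : spanDense {y : A.carrier | ∃ a b : A.carrier, y = a * b} := by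
  rw [spanDense, eq_top_iff]
  intro x _
  exact Submodule.le_topologicalClosure _ (mem_span_mul A x)

section TensorFacts

variable {A B : CStarAlg} (T : Tensor A B)

lemma Tensor.tmul_zero_left (b : B.carrier) : T.tmul 0 b = 0 := by
  calc T.tmul 0 b = T.tmul ((0 : ℂ) • 0) b := by rw [smul_zero]
  _ = (0 : ℂ) • T.tmul 0 b := T.smul_tmul 0 0 b
  _ = 0 := zero_smul _ _

lemma Tensor.tmul_zero_right_s11 (a : A.carrier) : T.tmul a 0 = 0 := by
  calc T.tmul a 0 = T.tmul a ((0 : ℂ) • 0) := by rw [smul_zero]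
  _ = (0 : ℂ) • T.tmul a 0 := T.tmul_smul 0 a 0
  _ = 0 := zero_smul _ _

lemma Tensor.sub_tmul (a a' : A.carrier) (b : B.carrier) :
    T.tmul (a - a') b = T.tmul a b - T.tmul a' b := by
  have h : a - a' = a + (-1 : ℂ) • a' := by rw [neg_one_smul, sub_eq_add_neg]
  rw [h, T.add_tmul, T.smul_tmul, neg_one_smul, ← sub_eq_add_neg]

lemma Tensor.tmul_sub_s11 (a : A.carrier) (b b' : B.carrier) :
    T.tmul a (b - b') = T.tmul a b - T.tmul a b' := by
  have h : b - b' = b + (-1 : ℂ) • b' := by rw [neg_one_smul, sub_eq_add_neg]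
  rw [h, T.tmul_add, T.tmul_smul, neg_one_smul, ← sub_eq_add_neg]

lemma Tensor.norm_tmul_le_one (a : A.carrier) (b : B.carrier)
    (ha : ‖a‖ ≤ 1) (hb : ‖b‖ ≤ 1) : ‖T.tmul (star a * a) (star b * b)‖ ≤ 1 := by
  letI := cstarPO A.carrier; haveI := cstarSOR A.carrier
  letI := cstarPO B.carrier; haveI := cstarSOR B.carrier
  letI := cstarPO T.T.carrier; haveI := cstarSOR T.T.carrier
  set h : A.carrier := star a * a with hh
  set k : B.carrier := star b * b with hk
  have hsa_h : IsSelfAdjoint h := IsSelfAdjoint.star_mul_self a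
  have hsa_k : IsSelfAdjoint k := IsSelfAdjoint.star_mul_self b
  have hq_h : ∀ t ∈ quasispectrum ℝ h, 0 ≤ t := quasi_nonneg_star_mul_self a
  have hq_k : ∀ t ∈ quasispectrum ℝ k, 0 ≤ t := quasi_nonneg_star_mul_self b
  have hnh : ‖h‖ ≤ 1 := by
    rw [hh, CStarRing.norm_star_mul_self]
    nlinarith [norm_nonneg a]
  have hnk : ‖k‖ ≤ 1 := by
    rw [hk, CStarRing.norm_star_mul_self]
    nlinarith [norm_nonneg b]
  -- square roots
  have hrsa : IsSelfAdjoint (cfcₙ Real.sqrt h) := cfcₙ_predicate _ _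
  have hssa : IsSelfAdjoint (cfcₙ Real.sqrt k) := cfcₙ_predicate _ _
  have hr2 : cfcₙ Real.sqrt h * cfcₙ Real.sqrt h = h := sqrt_mul_self_of_quasi h hsa_h hq_h
  have hs2 : cfcₙ Real.sqrt k * cfcₙ Real.sqrt k = k := sqrt_mul_self_of_quasi k hsa_k hq_k
  -- fourth roots
  have c44 : Continuous (fun t : ℝ => Real.sqrt (Real.sqrt t)) :=
    Real.continuous_sqrt.comp Real.continuous_sqrt
  have hc2sa : IsSelfAdjoint (cfcₙ (fun t : ℝ => Real.sqrt (Real.sqrt t)) h) :=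
    cfcₙ_predicate _ _
  have hd2sa : IsSelfAdjoint (cfcₙ (fun t : ℝ => Real.sqrt (Real.sqrt t)) k) :=
    cfcₙ_predicate _ _
  have fourth_sq : ∀ (x : A.carrier),
      cfcₙ (fun t : ℝ => Real.sqrt (Real.sqrt t)) x
        * cfcₙ (fun t : ℝ => Real.sqrt (Real.sqrt t)) x = cfcₙ Real.sqrt x := by
    intro x
    rw [← cfcₙ_mul _ _ x c44.continuousOn (by simp) c44.continuousOn (by simp)]
    exact cfcₙ_congr (fun t _ => Real.mul_self_sqrt (Real.sqrt_nonneg t))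
  have fourth_sqB : ∀ (x : B.carrier),
      cfcₙ (fun t : ℝ => Real.sqrt (Real.sqrt t)) x
        * cfcₙ (fun t : ℝ => Real.sqrt (Real.sqrt t)) x = cfcₙ Real.sqrt x := by
    intro x
    rw [← cfcₙ_mul _ _ x c44.continuousOn (by simp) c44.continuousOn (by simp)]
    exact cfcₙ_congr (fun t _ => Real.mul_self_sqrt (Real.sqrt_nonneg t))
  -- square roots of the gaps
  have cgap : Continuous (fun t : ℝ => Real.sqrt (Real.sqrt t - t)) :=
    Real.continuous_sqrt.comp (Real.continuous_sqrt.sub continuous_id)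
  have hc1sa : IsSelfAdjoint (cfcₙ (fun t : ℝ => Real.sqrt (Real.sqrt t - t)) h) :=
    cfcₙ_predicate _ _
  have hd1sa : IsSelfAdjoint (cfcₙ (fun t : ℝ => Real.sqrt (Real.sqrt t - t)) k) :=
    cfcₙ_predicate _ _
  have hc1 : cfcₙ (fun t : ℝ => Real.sqrt (Real.sqrt t - t)) h
      * cfcₙ (fun t : ℝ => Real.sqrt (Real.sqrt t - t)) h = cfcₙ Real.sqrt h - h := by
    rw [← cfcₙ_mul _ _ h cgap.continuousOn (by simp) cgap.continuousOn (by simp)]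
    calc cfcₙ (fun t : ℝ => Real.sqrt (Real.sqrt t - t) * Real.sqrt (Real.sqrt t - t)) h
        = cfcₙ (fun t : ℝ => Real.sqrt t - t) h := by
          refine cfcₙ_congr (fun t ht => ?_)
          have h0 := hq_h t ht
          have h1 : t ≤ 1 := (quasi_le_norm h ht).trans hnh
          have h2 : t ≤ Real.sqrt t := by
            have h3 : t * t ≤ t := by nlinarith
            have h4 := Real.sqrt_le_sqrt h3
            rwa [Real.sqrt_mul_self h0] at h4
          exact Real.mul_self_sqrt (by linarith)
      _ = cfcₙ Real.sqrt h - h := by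
          rw [cfcₙ_sub Real.sqrt (fun t : ℝ => t) h Real.continuous_sqrt.continuousOn (by simp)
            continuous_id.continuousOn rfl]
          rw [cfcₙ_id' (R := ℝ) (a := h) hsa_h]
  have hd1 : cfcₙ (fun t : ℝ => Real.sqrt (Real.sqrt t - t)) k
      * cfcₙ (fun t : ℝ => Real.sqrt (Real.sqrt t - t)) k = cfcₙ Real.sqrt k - k := by
    rw [← cfcₙ_mul _ _ k cgap.continuousOn (by simp) cgap.continuousOn (by simp)]
    calc cfcₙ (fun t : ℝ => Real.sqrt (Real.sqrt t - t) * Real.sqrt (Real.sqrt t - t)) k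
        = cfcₙ (fun t : ℝ => Real.sqrt t - t) k := by
          refine cfcₙ_congr (fun t ht => ?_)
          have h0 := hq_k t ht
          have h1 : t ≤ 1 := (quasi_le_norm k ht).trans hnk
          have h2 : t ≤ Real.sqrt t := by
            have h3 : t * t ≤ t := by nlinarith
            have h4 := Real.sqrt_le_sqrt h3
            rwa [Real.sqrt_mul_self h0] at h4
          exact Real.mul_self_sqrt (by linarith)
      _ = cfcₙ Real.sqrt k - k := by
          rw [cfcₙ_sub Real.sqrt (fun t : ℝ => t) k Real.continuous_sqrt.continuousOn (by simp)
            continuous_id.continuousOn rfl]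
          rw [cfcₙ_id' (R := ℝ) (a := k) hsa_k]
  -- now work in the tensor product
  set v : T.T.carrier := T.tmul (cfcₙ Real.sqrt h) (cfcₙ Real.sqrt k) with hv
  have hvsa : star v = v := by rw [hv, T.tmul_star, hrsa.star_eq, hssa.star_eq]
  have hvv : v * v = T.tmul h k := by rw [hv, T.tmul_mul, hr2, hs2]
  have hv_nonneg : (0 : T.T.carrier) ≤ v := by
    have h1 : star (T.tmul (cfcₙ (fun t : ℝ => Real.sqrt (Real.sqrt t)) h)
        (cfcₙ (fun t : ℝ => Real.sqrt (Real.sqrt t)) k))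
        = T.tmul (cfcₙ (fun t : ℝ => Real.sqrt (Real.sqrt t)) h)
            (cfcₙ (fun t : ℝ => Real.sqrt (Real.sqrt t)) k) := by
      rw [T.tmul_star, hc2sa.star_eq, hd2sa.star_eq]
    have h2 := star_mul_self_nonneg (T.tmul (cfcₙ (fun t : ℝ => Real.sqrt (Real.sqrt t)) h)
        (cfcₙ (fun t : ℝ => Real.sqrt (Real.sqrt t)) k))
    rw [h1, T.tmul_mul, fourth_sq, fourth_sqB] at h2
    rw [hv]
    exact h2
  have hvv_nonneg : (0 : T.T.carrier) ≤ v * v := by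
    have h2 := star_mul_self_nonneg v
    rwa [hvsa] at h2
  have hP1 : (0 : T.T.carrier) ≤ T.tmul (cfcₙ Real.sqrt h - h) (cfcₙ Real.sqrt k) := by
    have h1 : star (T.tmul (cfcₙ (fun t : ℝ => Real.sqrt (Real.sqrt t - t)) h)
        (cfcₙ (fun t : ℝ => Real.sqrt (Real.sqrt t)) k))
        = T.tmul (cfcₙ (fun t : ℝ => Real.sqrt (Real.sqrt t - t)) h)
            (cfcₙ (fun t : ℝ => Real.sqrt (Real.sqrt t)) k) := by
      rw [T.tmul_star, hc1sa.star_eq, hd2sa.star_eq]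
    have h2 := star_mul_self_nonneg (T.tmul (cfcₙ (fun t : ℝ => Real.sqrt (Real.sqrt t - t)) h)
        (cfcₙ (fun t : ℝ => Real.sqrt (Real.sqrt t)) k))
    rwa [h1, T.tmul_mul, hc1, fourth_sqB] at h2
  have hP2 : (0 : T.T.carrier) ≤ T.tmul h (cfcₙ Real.sqrt k - k) := by
    have h1 : star (T.tmul (cfcₙ Real.sqrt h)
        (cfcₙ (fun t : ℝ => Real.sqrt (Real.sqrt t - t)) k))
        = T.tmul (cfcₙ Real.sqrt h) (cfcₙ (fun t : ℝ => Real.sqrt (Real.sqrt t - t)) k) := by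
      rw [T.tmul_star, hrsa.star_eq, hd1sa.star_eq]
    have h2 := star_mul_self_nonneg (T.tmul (cfcₙ Real.sqrt h)
        (cfcₙ (fun t : ℝ => Real.sqrt (Real.sqrt t - t)) k))
    rwa [h1, T.tmul_mul, hr2, hd1] at h2
  have hdecomp : v - v * v
      = T.tmul (cfcₙ Real.sqrt h - h) (cfcₙ Real.sqrt k) + T.tmul h (cfcₙ Real.sqrt k - k) := by
    rw [hvv, T.sub_tmul, T.tmul_sub_s11, hv]
    abel
  have hle : v * v ≤ v := by
    rw [← sub_nonneg, hdecomp]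
    exact add_nonneg hP1 hP2
  have hnorm1 : ‖v * v‖ ≤ ‖v‖ := CStarAlgebra.norm_le_norm_of_nonneg_of_le hvv_nonneg hle
  have hnorm2 : ‖v * v‖ = ‖v‖ * ‖v‖ := by
    have h2 := CStarRing.norm_star_mul_self (x := v)
    rwa [hvsa] at h2
  have final : ‖T.tmul h k‖ ≤ 1 := by
    rw [← hvv, hnorm2]
    nlinarith [norm_nonneg v]
  exact final

lemma Tensor.norm_tmul_le (a : A.carrier) (b : B.carrier) :
    ‖T.tmul a b‖ ≤ ‖a‖ * ‖b‖ := by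
  rcases eq_or_ne a 0 with rfl | ha0
  · rw [T.tmul_zero_left]; simp
  rcases eq_or_ne b 0 with rfl | hb0
  · rw [T.tmul_zero_right_s11]; simp
  have hna : (0 : ℝ) < ‖a‖ := norm_pos_iff.mpr ha0
  have hnb : (0 : ℝ) < ‖b‖ := norm_pos_iff.mpr hb0
  have hna' : ‖((‖a‖ : ℂ))⁻¹ • a‖ ≤ 1 := by
    rw [norm_smul]
    simp only [norm_inv, Complex.norm_real, Real.norm_eq_abs, abs_of_pos hna]
    rw [inv_mul_cancel₀ (ne_of_gt hna)]
  have hnb' : ‖((‖b‖ : ℂ))⁻¹ • b‖ ≤ 1 := by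
    rw [norm_smul]
    simp only [norm_inv, Complex.norm_real, Real.norm_eq_abs, abs_of_pos hnb]
    rw [inv_mul_cancel₀ (ne_of_gt hnb)]
  have key := T.norm_tmul_le_one _ _ hna' hnb'
  have e1 : star (((‖a‖ : ℂ))⁻¹ • a) * (((‖a‖ : ℂ))⁻¹ • a)
      = (((‖a‖ : ℂ))⁻¹ * ((‖a‖ : ℂ))⁻¹) • (star a * a) := by
    rw [star_smul, smul_mul_smul_comm]
    congr 1
    rw [star_inv₀]
    simp [Complex.conj_ofReal]
  have e2 : star (((‖b‖ : ℂ))⁻¹ • b) * (((‖b‖ : ℂ))⁻¹ • b)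
      = (((‖b‖ : ℂ))⁻¹ * ((‖b‖ : ℂ))⁻¹) • (star b * b) := by
    rw [star_smul, smul_mul_smul_comm]
    congr 1
    rw [star_inv₀]
    simp [Complex.conj_ofReal]
  rw [e1, e2, T.smul_tmul, T.tmul_smul, smul_smul, norm_smul] at key
  have e3 : ‖((‖a‖ : ℂ))⁻¹ * ((‖a‖ : ℂ))⁻¹ * (((‖b‖ : ℂ))⁻¹ * ((‖b‖ : ℂ))⁻¹)‖
      = (‖a‖ * ‖a‖ * (‖b‖ * ‖b‖))⁻¹ := by
    simp only [norm_mul, norm_inv, Complex.norm_real, Real.norm_eq_abs,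
      abs_of_pos hna, abs_of_pos hnb]
    rw [mul_inv, mul_inv, mul_inv]
  rw [e3] at key
  have hpos : (0 : ℝ) < ‖a‖ * ‖a‖ * (‖b‖ * ‖b‖) := by positivity
  rw [inv_mul_le_iff₀ hpos, mul_one] at key
  have hsq : ‖T.tmul a b‖ * ‖T.tmul a b‖ = ‖T.tmul (star a * a) (star b * b)‖ := by
    rw [← T.tmul_mul, ← T.tmul_star, CStarRing.norm_star_mul_self]
  nlinarith [norm_nonneg (T.tmul a b), mul_nonneg hna.le hnb.le]

lemma Tensor.tmul_cont_left_s11 (b : B.carrier) : Continuous (fun a => T.tmul a b) :=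
  continuous_of_add_bound _ (fun x y => T.add_tmul x y b) ‖b‖
    (fun x => le_of_le_of_eq (T.norm_tmul_le x b) (mul_comm _ _))

lemma Tensor.tmul_cont_right (a : A.carrier) : Continuous (fun b => T.tmul a b) :=
  continuous_of_add_bound _ (fun x y => T.tmul_add a x y) ‖a‖ (fun x => T.norm_tmul_le a x)

end TensorFacts

section MultiplierFacts

variable {C : CStarAlg} (m : Multiplier C)

lemma Multiplier.norm_incl (x : C.carrier) : ‖m.incl x‖ = ‖x‖ :=
  NonUnitalStarAlgHom.norm_map m.incl m.incl_injective x

lemma Multiplier.incl_cont_s11 : Continuous m.incl := CStarHom.cont m.incl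

lemma Multiplier.rmul_add' (u v : C.carrier) (w : m.M.carrier) :
    m.rmul (u + v) w = m.rmul u w + m.rmul v w := by
  apply m.incl_injective
  rw [m.rmul_spec, map_add, map_add, m.rmul_spec, m.rmul_spec, add_mul]

lemma Multiplier.rmul_smul' (c : ℂ) (u : C.carrier) (w : m.M.carrier) :
    m.rmul (c • u) w = c • m.rmul u w := by
  apply m.incl_injective
  rw [m.rmul_spec, map_smul, map_smul, m.rmul_spec, smul_mul_assoc]

lemma Multiplier.rmul_cont_s11 (w : m.M.carrier) : Continuous (fun u => m.rmul u w) := by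
  refine continuous_of_add_bound _ (fun x y => m.rmul_add' x y w) ‖w‖ (fun x => ?_)
  rw [← m.norm_incl (m.rmul x w), m.rmul_spec]
  calc ‖m.incl x * w‖ ≤ ‖m.incl x‖ * ‖w‖ := norm_mul_le _ _
  _ = ‖w‖ * ‖x‖ := by rw [m.norm_incl]; ring

lemma Multiplier.eq_of_tests (x y : m.M.carrier)
    (h : ∀ c, x * m.incl c = y * m.incl c) : x = y := by
  have h0 : ∀ c, (x - y) * m.incl c = 0 := fun c => by rw [sub_mul, h c, sub_self]
  exact sub_eq_zero.mp (m.essential (x - y) h0)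

end MultiplierFacts

section LinkingFacts

variable {A B : CStarAlg} {X : Imprim A B} (lk : Linking X)

lemma Linking.iX_norm (x : X.X) : ‖lk.iX x‖ = ‖x‖ := by
  refine sq_eq_of_nonneg (norm_nonneg _) (norm_nonneg _) ?_
  rw [← CStarRing.norm_star_mul_self (x := lk.iX x), lk.mul_XstarX,
    NonUnitalStarAlgHom.norm_map lk.iB lk.iB_injective]
  have h := X.norm_rinner x
  rw [pow_two] at h
  rw [← h]

lemma Linking.iX_cont : Continuous lk.iX :=
  continuous_of_add_bound _ (map_add _) 1 (fun x => by rw [lk.iX_norm, one_mul])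

lemma Linking.iX_iK_zero (x : X.X) (k : A.carrier) : lk.iX x * lk.iK k = 0 := by
  apply spanDense_ind X.left_full _ ?_ ?_ ?_ ?_ ?_ k
  · exact isClosed_eq (continuous_const.mul (CStarHom.cont lk.iK)) continuous_const
  · show lk.iX x * lk.iK 0 = 0
    rw [map_zero, mul_zero]
  · intro a b ha hb
    show lk.iX x * lk.iK (a + b) = 0
    rw [map_add, mul_add, ha, hb, add_zero]
  · intro c a ha
    show lk.iX x * lk.iK (c • a) = 0
    rw [map_smul, mul_smul_comm, ha, smul_zero]
  · rintro _ ⟨y, z, rfl⟩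
    show lk.iX x * lk.iK (X.linner y z) = 0
    rw [← lk.mul_XXstar, ← mul_assoc, lk.mul_XX, zero_mul]

lemma Linking.iK_starX_zero (k : A.carrier) (x : X.X) : lk.iK k * star (lk.iX x) = 0 := by
  have h := congrArg star (lk.iX_iK_zero x (star k))
  rwa [star_mul, map_star, star_star, star_zero] at h

lemma Linking.iB_iX_zero (b : B.carrier) (x : X.X) : lk.iB b * lk.iX x = 0 := by
  apply spanDense_ind X.act_nondeg _ ?_ ?_ ?_ ?_ ?_ x
  · exact isClosed_eq (continuous_const.mul lk.iX_cont) continuous_const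
  · show lk.iB b * lk.iX 0 = 0
    rw [map_zero, mul_zero]
  · intro x y hx hy
    show lk.iB b * lk.iX (x + y) = 0
    rw [map_add, mul_add, hx, hy, add_zero]
  · intro c x hx
    show lk.iB b * lk.iX (c • x) = 0
    rw [map_smul, mul_smul_comm, hx, smul_zero]
  · rintro _ ⟨a, z, rfl⟩
    show lk.iB b * lk.iX (X.act a z) = 0
    rw [← lk.mul_KX, ← mul_assoc, lk.mul_BK, zero_mul]

include lk in
lemma Linking.act_smul_left (c : ℂ) (a : A.carrier) (x : X.X) :
    X.act (c • a) x = c • X.act a x := by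
  apply lk.iX_injective
  rw [← lk.mul_KX, map_smul, map_smul, smul_mul_assoc, lk.mul_KX]

include lk in
lemma Linking.act_zero_left (x : X.X) : X.act (0 : A.carrier) x = 0 := by
  apply lk.iX_injective
  rw [← lk.mul_KX, map_zero, zero_mul, map_zero]

include lk in
lemma Linking.act_cont_left (x : X.X) : Continuous (fun a => X.act a x) := by
  refine continuous_of_add_bound _ (fun a a' => X.add_act a a' x) ‖x‖ (fun a => ?_)
  rw [← lk.iX_norm, ← lk.mul_KX]
  calc ‖lk.iK a * lk.iX x‖ ≤ ‖lk.iK a‖ * ‖lk.iX x‖ := norm_mul_le _ _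
  _ ≤ ‖a‖ * ‖x‖ := by
      rw [lk.iX_norm]
      exact mul_le_mul_of_nonneg_right (NonUnitalStarAlgHom.norm_apply_le lk.iK a) (norm_nonneg x)
  _ = ‖x‖ * ‖a‖ := mul_comm _ _

include lk in
lemma Linking.rsmul_spanDense : spanDense {z : X.X | ∃ x b, z = X.rsmul x b} := by
  rw [spanDense, eq_top_iff]
  rintro z -
  apply spanDense_ind X.act_nondeg
    _
    ?_ ?_ ?_ ?_ ?_ z
  · exact (Submodule.span ℂ {z : X.X | ∃ x b, z = X.rsmul x b}).isClosed_topologicalClosure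
  · exact Submodule.zero_mem _
  · exact fun x y hx hy => Submodule.add_mem _ hx hy
  · exact fun c x hx => Submodule.smul_mem _ c hx
  · rintro _ ⟨a, x, rfl⟩
    apply spanDense_ind X.left_full
      _
      ?_ ?_ ?_ ?_ ?_ a
    · exact IsClosed.preimage (lk.act_cont_left x)
        (Submodule.span ℂ {z : X.X | ∃ x b, z = X.rsmul x b}).isClosed_topologicalClosure
    · show X.act 0 x ∈ _
      rw [lk.act_zero_left]
      exact Submodule.zero_mem _
    · intro a a' ha ha'
      show X.act (a + a') x ∈ _
      rw [X.add_act]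
      exact Submodule.add_mem _ ha ha'
    · intro c a ha
      show X.act (c • a) x ∈ _
      rw [lk.act_smul_left]
      exact Submodule.smul_mem _ c ha
    · rintro _ ⟨y, w, rfl⟩
      show X.act (X.linner y w) x ∈ _
      rw [X.imprim]
      exact Submodule.le_topologicalClosure _ (Submodule.subset_span ⟨y, X.rinner w x, rfl⟩)

end LinkingFacts

section MainProof

variable {H : HopfCStar} {A B : CStarAlg}
  {dA : Coaction H A} {dB : Coaction H B} {X : Imprim A B}
  {ibc : IBCoaction H dA dB X} {lk : Linking X} (lc : LinkingCoaction ibc lk)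

lemma Multiplier.rmul_zero {C : CStarAlg} (m : Multiplier C) (w : m.M.carrier) :
    m.rmul 0 w = 0 := by
  apply m.incl_injective
  rw [m.rmul_spec, map_zero, zero_mul]

/-- `(K ⊗ S)·(L ⊗ S)` multiplication against an elementary corner factorization. -/
lemma LinkingCoaction.eKS_mul_elem (u : dA.AS.T.carrier) (a' : A.carrier) (l' : lk.L.carrier)
    (p q : H.S.carrier) :
    lc.eKS u * lc.dL.AS.tmul (lk.iK a' * l') (p * q)
      = lc.eKS (u * dA.AS.tmul a' p) * lc.dL.AS.tmul l' q := by
  apply spanDense_ind dA.AS.dense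
    _ ?_ ?_ ?_ ?_ ?_ u
  · exact isClosed_eq
      ((CStarHom.cont lc.eKS).mul continuous_const)
      (((CStarHom.cont lc.eKS).comp (continuous_mul_right _)).mul continuous_const)
  · show lc.eKS 0 * _ = lc.eKS (0 * _) * _
    rw [map_zero, zero_mul, zero_mul, map_zero, zero_mul]
  · intro x y hx hy
    show lc.eKS (x + y) * _ = lc.eKS ((x + y) * _) * _
    rw [map_add, add_mul, hx, hy, add_mul, map_add, add_mul]
  · intro c x hx
    show lc.eKS (c • x) * _ = lc.eKS ((c • x) * _) * _
    rw [map_smul, smul_mul_assoc, hx, smul_mul_assoc, map_smul, smul_mul_assoc]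
  · rintro _ ⟨a₀, s₀, rfl⟩
    show lc.eKS (dA.AS.tmul a₀ s₀) * _ = lc.eKS (dA.AS.tmul a₀ s₀ * dA.AS.tmul a' p) * _
    rw [lc.eKS_tmul, lc.dL.AS.tmul_mul, dA.AS.tmul_mul, lc.eKS_tmul, lc.dL.AS.tmul_mul,
      show lk.iK a₀ * (lk.iK a' * l') = lk.iK (a₀ * a') * l' by rw [← mul_assoc, ← map_mul],
      show s₀ * (p * q) = s₀ * p * q from (mul_assoc s₀ p q).symm]

lemma LinkingCoaction.eBS_mul_elem (u : dB.AS.T.carrier) (b' : B.carrier) (l' : lk.L.carrier)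
    (p q : H.S.carrier) :
    lc.eBS u * lc.dL.AS.tmul (lk.iB b' * l') (p * q)
      = lc.eBS (u * dB.AS.tmul b' p) * lc.dL.AS.tmul l' q := by
  apply spanDense_ind dB.AS.dense
    _ ?_ ?_ ?_ ?_ ?_ u
  · exact isClosed_eq
      ((CStarHom.cont lc.eBS).mul continuous_const)
      (((CStarHom.cont lc.eBS).comp (continuous_mul_right _)).mul continuous_const)
  · show lc.eBS 0 * _ = lc.eBS (0 * _) * _
    rw [map_zero, zero_mul, zero_mul, map_zero, zero_mul]
  · intro x y hx hy
    show lc.eBS (x + y) * _ = lc.eBS ((x + y) * _) * _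
    rw [map_add, add_mul, hx, hy, add_mul, map_add, add_mul]
  · intro c x hx
    show lc.eBS (c • x) * _ = lc.eBS ((c • x) * _) * _
    rw [map_smul, smul_mul_assoc, hx, smul_mul_assoc, map_smul, smul_mul_assoc]
  · rintro _ ⟨b₀, s₀, rfl⟩
    show lc.eBS (dB.AS.tmul b₀ s₀) * _ = lc.eBS (dB.AS.tmul b₀ s₀ * dB.AS.tmul b' p) * _
    rw [lc.eBS_tmul, lc.dL.AS.tmul_mul, dB.AS.tmul_mul, lc.eBS_tmul, lc.dL.AS.tmul_mul,
      show lk.iB b₀ * (lk.iB b' * l') = lk.iB (b₀ * b') * l' by rw [← mul_assoc, ← map_mul],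
      show s₀ * (p * q) = s₀ * p * q from (mul_assoc s₀ p q).symm]

lemma LinkingCoaction.eKS_mul_iB (u : dA.AS.T.carrier) (b' : B.carrier) (t : H.S.carrier) :
    lc.eKS u * lc.dL.AS.tmul (lk.iB b') t = 0 := by
  apply spanDense_ind dA.AS.dense
    _ ?_ ?_ ?_ ?_ ?_ u
  · exact isClosed_eq ((CStarHom.cont lc.eKS).mul continuous_const) continuous_const
  · show lc.eKS 0 * _ = 0
    rw [map_zero, zero_mul]
  · intro x y hx hy
    show lc.eKS (x + y) * _ = 0
    rw [map_add, add_mul, hx, hy, add_zero]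
  · intro c x hx
    show lc.eKS (c • x) * _ = 0
    rw [map_smul, smul_mul_assoc, hx, smul_zero]
  · rintro _ ⟨a₀, s₀, rfl⟩
    show lc.eKS (dA.AS.tmul a₀ s₀) * _ = 0
    rw [lc.eKS_tmul, lc.dL.AS.tmul_mul, lk.mul_KB, lc.dL.AS.tmul_zero_left]

lemma LinkingCoaction.eKS_mul_starX (u : dA.AS.T.carrier) (x : X.X) (t : H.S.carrier) :
    lc.eKS u * lc.dL.AS.tmul (star (lk.iX x)) t = 0 := by
  apply spanDense_ind dA.AS.dense
    _ ?_ ?_ ?_ ?_ ?_ u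
  · exact isClosed_eq ((CStarHom.cont lc.eKS).mul continuous_const) continuous_const
  · show lc.eKS 0 * _ = 0
    rw [map_zero, zero_mul]
  · intro y z hy hz
    show lc.eKS (y + z) * _ = 0
    rw [map_add, add_mul, hy, hz, add_zero]
  · intro c y hy
    show lc.eKS (c • y) * _ = 0
    rw [map_smul, smul_mul_assoc, hy, smul_zero]
  · rintro _ ⟨a₀, s₀, rfl⟩
    show lc.eKS (dA.AS.tmul a₀ s₀) * _ = 0
    rw [lc.eKS_tmul, lc.dL.AS.tmul_mul, lk.iK_starX_zero, lc.dL.AS.tmul_zero_left]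

lemma LinkingCoaction.eBS_mul_iK (u : dB.AS.T.carrier) (k : A.carrier) (t : H.S.carrier) :
    lc.eBS u * lc.dL.AS.tmul (lk.iK k) t = 0 := by
  apply spanDense_ind dB.AS.dense
    _ ?_ ?_ ?_ ?_ ?_ u
  · exact isClosed_eq ((CStarHom.cont lc.eBS).mul continuous_const) continuous_const
  · show lc.eBS 0 * _ = 0
    rw [map_zero, zero_mul]
  · intro x y hx hy
    show lc.eBS (x + y) * _ = 0
    rw [map_add, add_mul, hx, hy, add_zero]
  · intro c x hx
    show lc.eBS (c • x) * _ = 0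
    rw [map_smul, smul_mul_assoc, hx, smul_zero]
  · rintro _ ⟨b₀, s₀, rfl⟩
    show lc.eBS (dB.AS.tmul b₀ s₀) * _ = 0
    rw [lc.eBS_tmul, lc.dL.AS.tmul_mul, lk.mul_BK, lc.dL.AS.tmul_zero_left]

lemma LinkingCoaction.eBS_mul_iX (u : dB.AS.T.carrier) (x : X.X) (t : H.S.carrier) :
    lc.eBS u * lc.dL.AS.tmul (lk.iX x) t = 0 := by
  apply spanDense_ind dB.AS.dense
    _ ?_ ?_ ?_ ?_ ?_ u
  · exact isClosed_eq ((CStarHom.cont lc.eBS).mul continuous_const) continuous_const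
  · show lc.eBS 0 * _ = 0
    rw [map_zero, zero_mul]
  · intro y z hy hz
    show lc.eBS (y + z) * _ = 0
    rw [map_add, add_mul, hy, hz, add_zero]
  · intro c y hy
    show lc.eBS (c • y) * _ = 0
    rw [map_smul, smul_mul_assoc, hy, smul_zero]
  · rintro _ ⟨b₀, s₀, rfl⟩
    show lc.eBS (dB.AS.tmul b₀ s₀) * _ = 0
    rw [lc.eBS_tmul, lc.dL.AS.tmul_mul, lk.iB_iX_zero, lc.dL.AS.tmul_zero_left]

lemma LinkingCoaction.EK_main (u : dA.AS.T.carrier) (a b : A.carrier)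
    (hu : dA.mAS.incl u = dA.coact.toHom a * dA.tensOne b)
    (a' : A.carrier) (l' : lk.L.carrier) (t : H.S.carrier) :
    lc.dL.mAS.incl (lc.eKS u) * lc.dL.mAS.incl (lc.dL.AS.tmul (lk.iK a' * l') t)
      = lc.dL.coact.toHom (lk.iK a) * lc.dL.tensOne (lk.iK b)
          * lc.dL.mAS.incl (lc.dL.AS.tmul (lk.iK a' * l') t) := by
  have hcont : ∀ (z : lc.dL.mAS.M.carrier) (m : lk.L.carrier),
      Continuous (fun s : H.S.carrier => z * lc.dL.mAS.incl (lc.dL.AS.tmul m s)) :=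
    fun z m => continuous_const.mul (lc.dL.mAS.incl_cont_s11.comp (lc.dL.AS.tmul_cont_right m))
  apply spanDense_ind (mul_spanDense H.S)
    _ ?_ ?_ ?_ ?_ ?_ t
  · exact isClosed_eq (hcont _ _) (hcont _ _)
  · show _ * lc.dL.mAS.incl (lc.dL.AS.tmul _ 0) = _ * lc.dL.mAS.incl (lc.dL.AS.tmul _ 0)
    rw [lc.dL.AS.tmul_zero_right_s11, map_zero, mul_zero, mul_zero]
  · intro x y hx hy
    show _ = _
    rw [lc.dL.AS.tmul_add, map_add, mul_add, mul_add, hx, hy]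
  · intro c x hx
    show _ = _
    rw [lc.dL.AS.tmul_smul, map_smul, mul_smul_comm, mul_smul_comm, hx]
  · rintro _ ⟨s₀, s₃, rfl⟩
    apply spanDense_ind (mul_spanDense H.S)
      _ ?_ ?_ ?_ ?_ ?_ s₀
    · exact isClosed_eq
        (((hcont _ _)).comp (continuous_mul_right s₃))
        (((hcont _ _)).comp (continuous_mul_right s₃))
    · show _ = _
      rw [zero_mul, lc.dL.AS.tmul_zero_right_s11, map_zero, mul_zero, mul_zero]
    · intro x y hx hy
      show _ = _
      rw [add_mul, lc.dL.AS.tmul_add, map_add, mul_add, mul_add, hx, hy]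
    · intro c x hx
      show _ = _
      rw [smul_mul_assoc, lc.dL.AS.tmul_smul, map_smul, mul_smul_comm, mul_smul_comm, hx]
    · rintro _ ⟨s₁, s₂, rfl⟩
      -- the core computation
      have key : u * dA.AS.tmul a' (s₁ * s₂) = dA.lam a s₁ * dA.AS.tmul (b * a') s₂ := by
        apply dA.mAS.incl_injective
        rw [map_mul, map_mul, hu, dA.lam_spec, mul_assoc, dA.tensOne_tmul,
          ← dA.oneTens_tmul, ← mul_assoc]
      calc lc.dL.mAS.incl (lc.eKS u)
            * lc.dL.mAS.incl (lc.dL.AS.tmul (lk.iK a' * l') (s₁ * s₂ * s₃))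
          = lc.dL.mAS.incl (lc.eKS u * lc.dL.AS.tmul (lk.iK a' * l') (s₁ * s₂ * s₃)) :=
            (map_mul _ _ _).symm
        _ = lc.dL.mAS.incl (lc.eKS (u * dA.AS.tmul a' (s₁ * s₂)) * lc.dL.AS.tmul l' s₃) := by
            rw [lc.eKS_mul_elem]
        _ = lc.dL.mAS.incl (lc.eKS (dA.lam a s₁)
              * (lc.dL.AS.tmul (lk.iK (b * a')) s₂ * lc.dL.AS.tmul l' s₃)) := by
            rw [key, map_mul lc.eKS, lc.eKS_tmul, mul_assoc]
        _ = lc.dL.mAS.incl (lc.eKS (dA.lam a s₁)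
              * lc.dL.AS.tmul (lk.iK (b * a') * l') (s₂ * s₃)) := by
            rw [lc.dL.AS.tmul_mul]
        _ = lc.dL.mAS.incl (lc.eKS (dA.lam a s₁))
              * lc.dL.mAS.incl (lc.dL.AS.tmul (lk.iK (b * a') * l') (s₂ * s₃)) :=
            map_mul _ _ _
        _ = lc.dL.mAS.incl (lc.dL.lam (lk.iK a) s₁)
              * lc.dL.mAS.incl (lc.dL.AS.tmul (lk.iK (b * a') * l') (s₂ * s₃)) := by
            rw [lc.res_K]
        _ = lc.dL.coact.toHom (lk.iK a) * lc.dL.oneTens s₁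
              * lc.dL.mAS.incl (lc.dL.AS.tmul (lk.iK (b * a') * l') (s₂ * s₃)) := by
            rw [lc.dL.lam_spec]
        _ = lc.dL.coact.toHom (lk.iK a) * (lc.dL.oneTens s₁
              * lc.dL.mAS.incl (lc.dL.AS.tmul (lk.iK (b * a') * l') (s₂ * s₃))) :=
            mul_assoc _ _ _
        _ = lc.dL.coact.toHom (lk.iK a)
              * lc.dL.mAS.incl (lc.dL.AS.tmul (lk.iK (b * a') * l') (s₁ * (s₂ * s₃))) := by
            rw [lc.dL.oneTens_tmul]
        _ = lc.dL.coact.toHom (lk.iK a)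
              * lc.dL.mAS.incl (lc.dL.AS.tmul (lk.iK b * (lk.iK a' * l')) (s₁ * s₂ * s₃)) := by
            rw [map_mul lk.iK, mul_assoc (lk.iK b), mul_assoc s₁ s₂ s₃]
        _ = lc.dL.coact.toHom (lk.iK a) * (lc.dL.tensOne (lk.iK b)
              * lc.dL.mAS.incl (lc.dL.AS.tmul (lk.iK a' * l') (s₁ * s₂ * s₃))) := by
            rw [lc.dL.tensOne_tmul]
        _ = lc.dL.coact.toHom (lk.iK a) * lc.dL.tensOne (lk.iK b)
              * lc.dL.mAS.incl (lc.dL.AS.tmul (lk.iK a' * l') (s₁ * s₂ * s₃)) :=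
            (mul_assoc _ _ _).symm

lemma LinkingCoaction.EB_main (u : dB.AS.T.carrier) (a b : B.carrier)
    (hu : dB.mAS.incl u = dB.coact.toHom a * dB.tensOne b)
    (b' : B.carrier) (l' : lk.L.carrier) (t : H.S.carrier) :
    lc.dL.mAS.incl (lc.eBS u) * lc.dL.mAS.incl (lc.dL.AS.tmul (lk.iB b' * l') t)
      = lc.dL.coact.toHom (lk.iB a) * lc.dL.tensOne (lk.iB b)
          * lc.dL.mAS.incl (lc.dL.AS.tmul (lk.iB b' * l') t) := by
  have hcont : ∀ (z : lc.dL.mAS.M.carrier) (m : lk.L.carrier),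
      Continuous (fun s : H.S.carrier => z * lc.dL.mAS.incl (lc.dL.AS.tmul m s)) :=
    fun z m => continuous_const.mul (lc.dL.mAS.incl_cont_s11.comp (lc.dL.AS.tmul_cont_right m))
  apply spanDense_ind (mul_spanDense H.S)
    _ ?_ ?_ ?_ ?_ ?_ t
  · exact isClosed_eq (hcont _ _) (hcont _ _)
  · show _ * lc.dL.mAS.incl (lc.dL.AS.tmul _ 0) = _ * lc.dL.mAS.incl (lc.dL.AS.tmul _ 0)
    rw [lc.dL.AS.tmul_zero_right_s11, map_zero, mul_zero, mul_zero]
  · intro x y hx hy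
    show _ = _
    rw [lc.dL.AS.tmul_add, map_add, mul_add, mul_add, hx, hy]
  · intro c x hx
    show _ = _
    rw [lc.dL.AS.tmul_smul, map_smul, mul_smul_comm, mul_smul_comm, hx]
  · rintro _ ⟨s₀, s₃, rfl⟩
    apply spanDense_ind (mul_spanDense H.S)
      _ ?_ ?_ ?_ ?_ ?_ s₀
    · exact isClosed_eq
        (((hcont _ _)).comp (continuous_mul_right s₃))
        (((hcont _ _)).comp (continuous_mul_right s₃))
    · show _ = _
      rw [zero_mul, lc.dL.AS.tmul_zero_right_s11, map_zero, mul_zero, mul_zero]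
    · intro x y hx hy
      show _ = _
      rw [add_mul, lc.dL.AS.tmul_add, map_add, mul_add, mul_add, hx, hy]
    · intro c x hx
      show _ = _
      rw [smul_mul_assoc, lc.dL.AS.tmul_smul, map_smul, mul_smul_comm, mul_smul_comm, hx]
    · rintro _ ⟨s₁, s₂, rfl⟩
      have key : u * dB.AS.tmul b' (s₁ * s₂) = dB.lam a s₁ * dB.AS.tmul (b * b') s₂ := by
        apply dB.mAS.incl_injective
        rw [map_mul, map_mul, hu, dB.lam_spec, mul_assoc, dB.tensOne_tmul,
          ← dB.oneTens_tmul, ← mul_assoc]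
      calc lc.dL.mAS.incl (lc.eBS u)
            * lc.dL.mAS.incl (lc.dL.AS.tmul (lk.iB b' * l') (s₁ * s₂ * s₃))
          = lc.dL.mAS.incl (lc.eBS u * lc.dL.AS.tmul (lk.iB b' * l') (s₁ * s₂ * s₃)) :=
            (map_mul _ _ _).symm
        _ = lc.dL.mAS.incl (lc.eBS (u * dB.AS.tmul b' (s₁ * s₂)) * lc.dL.AS.tmul l' s₃) := by
            rw [lc.eBS_mul_elem]
        _ = lc.dL.mAS.incl (lc.eBS (dB.lam a s₁)
              * (lc.dL.AS.tmul (lk.iB (b * b')) s₂ * lc.dL.AS.tmul l' s₃)) := by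
            rw [key, map_mul lc.eBS, lc.eBS_tmul, mul_assoc]
        _ = lc.dL.mAS.incl (lc.eBS (dB.lam a s₁)
              * lc.dL.AS.tmul (lk.iB (b * b') * l') (s₂ * s₃)) := by
            rw [lc.dL.AS.tmul_mul]
        _ = lc.dL.mAS.incl (lc.eBS (dB.lam a s₁))
              * lc.dL.mAS.incl (lc.dL.AS.tmul (lk.iB (b * b') * l') (s₂ * s₃)) :=
            map_mul _ _ _
        _ = lc.dL.mAS.incl (lc.dL.lam (lk.iB a) s₁)
              * lc.dL.mAS.incl (lc.dL.AS.tmul (lk.iB (b * b') * l') (s₂ * s₃)) := by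
            rw [lc.res_B]
        _ = lc.dL.coact.toHom (lk.iB a) * lc.dL.oneTens s₁
              * lc.dL.mAS.incl (lc.dL.AS.tmul (lk.iB (b * b') * l') (s₂ * s₃)) := by
            rw [lc.dL.lam_spec]
        _ = lc.dL.coact.toHom (lk.iB a) * (lc.dL.oneTens s₁
              * lc.dL.mAS.incl (lc.dL.AS.tmul (lk.iB (b * b') * l') (s₂ * s₃))) :=
            mul_assoc _ _ _
        _ = lc.dL.coact.toHom (lk.iB a)
              * lc.dL.mAS.incl (lc.dL.AS.tmul (lk.iB (b * b') * l') (s₁ * (s₂ * s₃))) := by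
            rw [lc.dL.oneTens_tmul]
        _ = lc.dL.coact.toHom (lk.iB a)
              * lc.dL.mAS.incl (lc.dL.AS.tmul (lk.iB b * (lk.iB b' * l')) (s₁ * s₂ * s₃)) := by
            rw [map_mul lk.iB, mul_assoc (lk.iB b), mul_assoc s₁ s₂ s₃]
        _ = lc.dL.coact.toHom (lk.iB a) * (lc.dL.tensOne (lk.iB b)
              * lc.dL.mAS.incl (lc.dL.AS.tmul (lk.iB b' * l') (s₁ * s₂ * s₃))) := by
            rw [lc.dL.tensOne_tmul]
        _ = lc.dL.coact.toHom (lk.iB a) * lc.dL.tensOne (lk.iB b)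
              * lc.dL.mAS.incl (lc.dL.AS.tmul (lk.iB b' * l') (s₁ * s₂ * s₃)) :=
            (mul_assoc _ _ _).symm

lemma LinkingCoaction.incl_eKS (u : dA.AS.T.carrier) (a b : A.carrier)
    (hu : dA.mAS.incl u = dA.coact.toHom a * dA.tensOne b) :
    lc.dL.mAS.incl (lc.eKS u)
      = lc.dL.coact.toHom (lk.iK a) * lc.dL.tensOne (lk.iK b) := by
  apply lc.dL.mAS.eq_of_tests
  intro w
  apply spanDense_ind lc.dL.AS.dense
    _
    ?_ ?_ ?_ ?_ ?_ w
  · exact isClosed_eq (continuous_const.mul lc.dL.mAS.incl_cont_s11)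
      (continuous_const.mul lc.dL.mAS.incl_cont_s11)
  · rw [map_zero, mul_zero, mul_zero]
  · intro x y hx hy
    rw [map_add, mul_add, mul_add, hx, hy]
  · intro c x hx
    rw [map_smul, mul_smul_comm, mul_smul_comm, hx]
  · rintro _ ⟨l, t, rfl⟩
    apply spanDense_ind lk.span_dense
      _ ?_ ?_ ?_ ?_ ?_ l
    · exact isClosed_eq
        (continuous_const.mul (lc.dL.mAS.incl_cont_s11.comp (lc.dL.AS.tmul_cont_left_s11 t)))
        (continuous_const.mul (lc.dL.mAS.incl_cont_s11.comp (lc.dL.AS.tmul_cont_left_s11 t)))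
    · rw [lc.dL.AS.tmul_zero_left, map_zero, mul_zero, mul_zero]
    · intro x y hx hy
      rw [lc.dL.AS.add_tmul, map_add, mul_add, mul_add, hx, hy]
    · intro c x hx
      rw [lc.dL.AS.smul_tmul, map_smul, mul_smul_comm, mul_smul_comm, hx]
    · rintro l (⟨k, rfl⟩ | ⟨b', rfl⟩ | ⟨x, rfl⟩ | ⟨x, rfl⟩)
      · -- the `K` corner: reduce `k` to products
        apply spanDense_ind (mul_spanDense A)
          _ ?_ ?_ ?_ ?_ ?_ k
        · exact isClosed_eq
            (continuous_const.mul (lc.dL.mAS.incl_cont_s11.comp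
              ((lc.dL.AS.tmul_cont_left_s11 t).comp (CStarHom.cont lk.iK))))
            (continuous_const.mul (lc.dL.mAS.incl_cont_s11.comp
              ((lc.dL.AS.tmul_cont_left_s11 t).comp (CStarHom.cont lk.iK))))
        · rw [map_zero, lc.dL.AS.tmul_zero_left, map_zero, mul_zero, mul_zero]
        · intro x y hx hy
          rw [map_add, lc.dL.AS.add_tmul, map_add, mul_add, mul_add, hx, hy]
        · intro c x hx
          rw [map_smul, lc.dL.AS.smul_tmul, map_smul, mul_smul_comm, mul_smul_comm, hx]
        · rintro _ ⟨a₁, a₂, rfl⟩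
          rw [map_mul lk.iK]
          exact lc.EK_main u a b hu a₁ (lk.iK a₂) t
      · -- the `B` corner : both sides vanish
        have hL : lc.eKS u * lc.dL.AS.tmul (lk.iB b') t = 0 := lc.eKS_mul_iB u b' t
        calc lc.dL.mAS.incl (lc.eKS u) * lc.dL.mAS.incl (lc.dL.AS.tmul (lk.iB b') t)
            = lc.dL.mAS.incl (lc.eKS u * lc.dL.AS.tmul (lk.iB b') t) := (map_mul _ _ _).symm
          _ = 0 := by rw [hL, map_zero]
          _ = lc.dL.coact.toHom (lk.iK a) * lc.dL.tensOne (lk.iK b)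
                * lc.dL.mAS.incl (lc.dL.AS.tmul (lk.iB b') t) := by
              rw [mul_assoc, lc.dL.tensOne_tmul, lk.mul_KB, lc.dL.AS.tmul_zero_left,
                map_zero, mul_zero]
      · -- the `X` corner: reduce `x` to `act a₁ x₁`
        apply spanDense_ind X.act_nondeg
          _ ?_ ?_ ?_ ?_ ?_ x
        · exact isClosed_eq
            (continuous_const.mul (lc.dL.mAS.incl_cont_s11.comp
              ((lc.dL.AS.tmul_cont_left_s11 t).comp lk.iX_cont)))
            (continuous_const.mul (lc.dL.mAS.incl_cont_s11.comp
              ((lc.dL.AS.tmul_cont_left_s11 t).comp lk.iX_cont)))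
        · rw [map_zero, lc.dL.AS.tmul_zero_left, map_zero, mul_zero, mul_zero]
        · intro x y hx hy
          rw [map_add, lc.dL.AS.add_tmul, map_add, mul_add, mul_add, hx, hy]
        · intro c x hx
          rw [map_smul, lc.dL.AS.smul_tmul, map_smul, mul_smul_comm, mul_smul_comm, hx]
        · rintro _ ⟨a₁, x₁, rfl⟩
          rw [← lk.mul_KX]
          exact lc.EK_main u a b hu a₁ (lk.iX x₁) t
      · -- the `star X` corner : both sides vanish
        have hL : lc.eKS u * lc.dL.AS.tmul (star (lk.iX x)) t = 0 := lc.eKS_mul_starX u x t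
        calc lc.dL.mAS.incl (lc.eKS u) * lc.dL.mAS.incl (lc.dL.AS.tmul (star (lk.iX x)) t)
            = lc.dL.mAS.incl (lc.eKS u * lc.dL.AS.tmul (star (lk.iX x)) t) :=
              (map_mul _ _ _).symm
          _ = 0 := by rw [hL, map_zero]
          _ = lc.dL.coact.toHom (lk.iK a) * lc.dL.tensOne (lk.iK b)
                * lc.dL.mAS.incl (lc.dL.AS.tmul (star (lk.iX x)) t) := by
              rw [mul_assoc, lc.dL.tensOne_tmul, lk.iK_starX_zero, lc.dL.AS.tmul_zero_left,
                map_zero, mul_zero]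

lemma LinkingCoaction.incl_eBS (u : dB.AS.T.carrier) (a b : B.carrier)
    (hu : dB.mAS.incl u = dB.coact.toHom a * dB.tensOne b) :
    lc.dL.mAS.incl (lc.eBS u)
      = lc.dL.coact.toHom (lk.iB a) * lc.dL.tensOne (lk.iB b) := by
  apply lc.dL.mAS.eq_of_tests
  intro w
  apply spanDense_ind lc.dL.AS.dense
    _
    ?_ ?_ ?_ ?_ ?_ w
  · exact isClosed_eq (continuous_const.mul lc.dL.mAS.incl_cont_s11)
      (continuous_const.mul lc.dL.mAS.incl_cont_s11)
  · rw [map_zero, mul_zero, mul_zero]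
  · intro x y hx hy
    rw [map_add, mul_add, mul_add, hx, hy]
  · intro c x hx
    rw [map_smul, mul_smul_comm, mul_smul_comm, hx]
  · rintro _ ⟨l, t, rfl⟩
    apply spanDense_ind lk.span_dense
      _ ?_ ?_ ?_ ?_ ?_ l
    · exact isClosed_eq
        (continuous_const.mul (lc.dL.mAS.incl_cont_s11.comp (lc.dL.AS.tmul_cont_left_s11 t)))
        (continuous_const.mul (lc.dL.mAS.incl_cont_s11.comp (lc.dL.AS.tmul_cont_left_s11 t)))
    · rw [lc.dL.AS.tmul_zero_left, map_zero, mul_zero, mul_zero]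
    · intro x y hx hy
      rw [lc.dL.AS.add_tmul, map_add, mul_add, mul_add, hx, hy]
    · intro c x hx
      rw [lc.dL.AS.smul_tmul, map_smul, mul_smul_comm, mul_smul_comm, hx]
    · rintro l (⟨k, rfl⟩ | ⟨b', rfl⟩ | ⟨x, rfl⟩ | ⟨x, rfl⟩)
      · -- the `K` corner : both sides vanish
        have hL : lc.eBS u * lc.dL.AS.tmul (lk.iK k) t = 0 := lc.eBS_mul_iK u k t
        calc lc.dL.mAS.incl (lc.eBS u) * lc.dL.mAS.incl (lc.dL.AS.tmul (lk.iK k) t)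
            = lc.dL.mAS.incl (lc.eBS u * lc.dL.AS.tmul (lk.iK k) t) := (map_mul _ _ _).symm
          _ = 0 := by rw [hL, map_zero]
          _ = lc.dL.coact.toHom (lk.iB a) * lc.dL.tensOne (lk.iB b)
                * lc.dL.mAS.incl (lc.dL.AS.tmul (lk.iK k) t) := by
              rw [mul_assoc, lc.dL.tensOne_tmul, lk.mul_BK, lc.dL.AS.tmul_zero_left,
                map_zero, mul_zero]
      · -- the `B` corner: reduce `b'` to products
        apply spanDense_ind (mul_spanDense B)
          _ ?_ ?_ ?_ ?_ ?_ b'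
        · exact isClosed_eq
            (continuous_const.mul (lc.dL.mAS.incl_cont_s11.comp
              ((lc.dL.AS.tmul_cont_left_s11 t).comp (CStarHom.cont lk.iB))))
            (continuous_const.mul (lc.dL.mAS.incl_cont_s11.comp
              ((lc.dL.AS.tmul_cont_left_s11 t).comp (CStarHom.cont lk.iB))))
        · rw [map_zero, lc.dL.AS.tmul_zero_left, map_zero, mul_zero, mul_zero]
        · intro x y hx hy
          rw [map_add, lc.dL.AS.add_tmul, map_add, mul_add, mul_add, hx, hy]
        · intro c x hx
          rw [map_smul, lc.dL.AS.smul_tmul, map_smul, mul_smul_comm, mul_smul_comm, hx]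
        · rintro _ ⟨b₁, b₂, rfl⟩
          rw [map_mul lk.iB]
          exact lc.EB_main u a b hu b₁ (lk.iB b₂) t
      · -- the `X` corner : both sides vanish
        have hL : lc.eBS u * lc.dL.AS.tmul (lk.iX x) t = 0 := lc.eBS_mul_iX u x t
        calc lc.dL.mAS.incl (lc.eBS u) * lc.dL.mAS.incl (lc.dL.AS.tmul (lk.iX x) t)
            = lc.dL.mAS.incl (lc.eBS u * lc.dL.AS.tmul (lk.iX x) t) := (map_mul _ _ _).symm
          _ = 0 := by rw [hL, map_zero]
          _ = lc.dL.coact.toHom (lk.iB a) * lc.dL.tensOne (lk.iB b)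
                * lc.dL.mAS.incl (lc.dL.AS.tmul (lk.iX x) t) := by
              rw [mul_assoc, lc.dL.tensOne_tmul, lk.iB_iX_zero, lc.dL.AS.tmul_zero_left,
                map_zero, mul_zero]
      · -- the `star X` corner: reduce `x` over `X·B`
        apply spanDense_ind (lk.rsmul_spanDense)
          _ ?_ ?_ ?_ ?_ ?_ x
        · exact isClosed_eq
            (continuous_const.mul (lc.dL.mAS.incl_cont_s11.comp
              ((lc.dL.AS.tmul_cont_left_s11 t).comp (continuous_star.comp lk.iX_cont))))
            (continuous_const.mul (lc.dL.mAS.incl_cont_s11.comp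
              ((lc.dL.AS.tmul_cont_left_s11 t).comp (continuous_star.comp lk.iX_cont))))
        · rw [map_zero, star_zero, lc.dL.AS.tmul_zero_left, map_zero, mul_zero, mul_zero]
        · intro x y hx hy
          rw [map_add, star_add, lc.dL.AS.add_tmul, map_add, mul_add, mul_add, hx, hy]
        · intro c x hx
          rw [map_smul, star_smul, lc.dL.AS.smul_tmul, map_smul, mul_smul_comm,
            mul_smul_comm, hx]
        · rintro _ ⟨x₁, b₁, rfl⟩
          have hst : star (lk.iX (X.rsmul x₁ b₁)) = lk.iB (star b₁) * star (lk.iX x₁) := by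
            rw [← lk.mul_XB, star_mul, map_star]
          rw [hst]
          exact lc.EB_main u a b hu (star b₁) (star (lk.iX x₁)) t

end MainProof

end Statement11Aux

/-- Let `(δ_A, δ_X, δ_B)` be an imprimitivity bimodule coaction of
a Hopf C*-algebra `S` on an `A – B` imprimitivity bimodule `X`, and let `δ_L` be the
associated coaction on the linking algebra `L = L(X)`.  If `δ_A` and `δ_B` are
effective, then `δ_L` is effective. -/
theorem linking_coaction_effective
    (H : HopfCStar) {A B : CStarAlg}
    (dA : Coaction H A) (dB : Coaction H B)
    (X : Imprim A B)
    (ibc : IBCoaction H dA dB X)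
    (lk : Linking X)
    (lc : LinkingCoaction ibc lk)
    (hA : dA.Effective) (hB : dB.Effective) :
    lc.dL.Effective := by
  show (Submodule.span ℂ {x : lc.dL.AS.T.carrier
    | ∃ a b, lc.dL.mAS.incl x = lc.dL.coact.toHom a * lc.dL.tensOne b}).topologicalClosure = ⊤
  set SL : Set lc.dL.AS.T.carrier :=
    {x | ∃ a b, lc.dL.mAS.incl x = lc.dL.coact.toHom a * lc.dL.tensOne b} with hSL
  rw [eq_top_iff]
  rintro z -
  -- membership in the closed span, by induction over elementary tensors
  apply spanDense_ind lc.dL.AS.dense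
    _ ?_ ?_ ?_ ?_ ?_ z
  · exact (Submodule.span ℂ SL).isClosed_topologicalClosure
  · exact Submodule.zero_mem _
  · exact fun x y hx hy => Submodule.add_mem _ hx hy
  · exact fun c x hx => Submodule.smul_mem _ c hx
  rintro _ ⟨l, t, rfl⟩
  -- reduce the first leg to the four corners
  apply spanDense_ind lk.span_dense
    _ ?_ ?_ ?_ ?_ ?_ l
  · exact IsClosed.preimage (lc.dL.AS.tmul_cont_left_s11 t)
      (Submodule.span ℂ SL).isClosed_topologicalClosure
  · rw [lc.dL.AS.tmul_zero_left]
    exact Submodule.zero_mem _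
  · intro x y hx hy
    rw [lc.dL.AS.add_tmul]
    exact Submodule.add_mem _ hx hy
  · intro c x hx
    rw [lc.dL.AS.smul_tmul]
    exact Submodule.smul_mem _ c hx
  rintro l (⟨k, rfl⟩ | ⟨b', rfl⟩ | ⟨x, rfl⟩ | ⟨x, rfl⟩)
  · -- the `A` corner
    have hall : ∀ v : dA.AS.T.carrier,
        lc.eKS v ∈ (Submodule.span ℂ SL).topologicalClosure := by
      intro v
      apply spanDense_ind hA
        _ ?_ ?_ ?_ ?_ ?_ v
      · exact IsClosed.preimage (CStarHom.cont lc.eKS)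
          (Submodule.span ℂ SL).isClosed_topologicalClosure
      · rw [map_zero]; exact Submodule.zero_mem _
      · intro x y hx hy
        rw [map_add]; exact Submodule.add_mem _ hx hy
      · intro c x hx
        rw [map_smul]; exact Submodule.smul_mem _ c hx
      · rintro v ⟨a₂, b₂, hv⟩
        exact Submodule.le_topologicalClosure _
          (Submodule.subset_span ⟨lk.iK a₂, lk.iK b₂, lc.incl_eKS v a₂ b₂ hv⟩)
    have he : lc.dL.AS.tmul (lk.iK k) t = lc.eKS (dA.AS.tmul k t) := (lc.eKS_tmul k t).symm
    rw [he]
    exact hall _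
  · -- the `B` corner
    have hall : ∀ v : dB.AS.T.carrier,
        lc.eBS v ∈ (Submodule.span ℂ SL).topologicalClosure := by
      intro v
      apply spanDense_ind hB
        _ ?_ ?_ ?_ ?_ ?_ v
      · exact IsClosed.preimage (CStarHom.cont lc.eBS)
          (Submodule.span ℂ SL).isClosed_topologicalClosure
      · rw [map_zero]; exact Submodule.zero_mem _
      · intro x y hx hy
        rw [map_add]; exact Submodule.add_mem _ hx hy
      · intro c x hx
        rw [map_smul]; exact Submodule.smul_mem _ c hx
      · rintro v ⟨b₂, b₃, hv⟩
        exact Submodule.le_topologicalClosure _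
          (Submodule.subset_span ⟨lk.iB b₂, lk.iB b₃, lc.incl_eBS v b₂ b₃ hv⟩)
    have he : lc.dL.AS.tmul (lk.iB b') t = lc.eBS (dB.AS.tmul b' t) := (lc.eBS_tmul b' t).symm
    rw [he]
    exact hall _
  · -- the `X` corner: reduce to `act a₁ x₁`
    apply spanDense_ind X.act_nondeg
      _
      ?_ ?_ ?_ ?_ ?_ x
    · exact IsClosed.preimage ((lc.dL.AS.tmul_cont_left_s11 t).comp lk.iX_cont)
        (Submodule.span ℂ SL).isClosed_topologicalClosure
    · rw [map_zero, lc.dL.AS.tmul_zero_left]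
      exact Submodule.zero_mem _
    · intro x y hx hy
      rw [map_add, lc.dL.AS.add_tmul]
      exact Submodule.add_mem _ hx hy
    · intro c x hx
      rw [map_smul, lc.dL.AS.smul_tmul]
      exact Submodule.smul_mem _ c hx
    rintro _ ⟨a₁, x₁, rfl⟩
    have hall : ∀ v : dA.AS.T.carrier,
        lc.dL.mAS.rmul (lc.eKS v) (lc.dL.tensOne (lk.iX x₁))
          ∈ (Submodule.span ℂ SL).topologicalClosure := by
      intro v
      apply spanDense_ind hA
        _ ?_ ?_ ?_ ?_ ?_ v
      · exact IsClosed.preimage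
          ((lc.dL.mAS.rmul_cont_s11 (lc.dL.tensOne (lk.iX x₁))).comp (CStarHom.cont lc.eKS))
          (Submodule.span ℂ SL).isClosed_topologicalClosure
      · rw [map_zero, lc.dL.mAS.rmul_zero]; exact Submodule.zero_mem _
      · intro x y hx hy
        rw [map_add, lc.dL.mAS.rmul_add']; exact Submodule.add_mem _ hx hy
      · intro c x hx
        rw [map_smul, lc.dL.mAS.rmul_smul']; exact Submodule.smul_mem _ c hx
      · rintro v ⟨a₂, b₂, hv⟩
        refine Submodule.le_topologicalClosure _
          (Submodule.subset_span ⟨lk.iK a₂, lk.iK b₂ * lk.iX x₁, ?_⟩)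
        rw [lc.dL.mAS.rmul_spec, lc.incl_eKS v a₂ b₂ hv, mul_assoc, lc.dL.tensOne_mul]
    have he : lc.dL.AS.tmul (lk.iX (X.act a₁ x₁)) t
        = lc.dL.mAS.rmul (lc.eKS (dA.AS.tmul a₁ t)) (lc.dL.tensOne (lk.iX x₁)) := by
      apply lc.dL.mAS.incl_injective
      rw [lc.dL.mAS.rmul_spec, lc.eKS_tmul, lc.dL.tmul_tensOne, lk.mul_KX]
    rw [he]
    exact hall _
  · -- the `star X` corner: reduce to `rsmul x₁ b₁`
    apply spanDense_ind lk.rsmul_spanDense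
      _
      ?_ ?_ ?_ ?_ ?_ x
    · exact IsClosed.preimage
        ((lc.dL.AS.tmul_cont_left_s11 t).comp (continuous_star.comp lk.iX_cont))
        (Submodule.span ℂ SL).isClosed_topologicalClosure
    · rw [map_zero, star_zero, lc.dL.AS.tmul_zero_left]
      exact Submodule.zero_mem _
    · intro x y hx hy
      rw [map_add, star_add, lc.dL.AS.add_tmul]
      exact Submodule.add_mem _ hx hy
    · intro c x hx
      rw [map_smul, star_smul, lc.dL.AS.smul_tmul]
      exact Submodule.smul_mem _ _ hx
    rintro _ ⟨x₁, b₁, rfl⟩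
    have hall : ∀ v : dB.AS.T.carrier,
        lc.dL.mAS.rmul (lc.eBS v) (lc.dL.tensOne (star (lk.iX x₁)))
          ∈ (Submodule.span ℂ SL).topologicalClosure := by
      intro v
      apply spanDense_ind hB
        _ ?_ ?_ ?_ ?_ ?_ v
      · exact IsClosed.preimage
          ((lc.dL.mAS.rmul_cont_s11 (lc.dL.tensOne (star (lk.iX x₁)))).comp (CStarHom.cont lc.eBS))
          (Submodule.span ℂ SL).isClosed_topologicalClosure
      · rw [map_zero, lc.dL.mAS.rmul_zero]; exact Submodule.zero_mem _
      · intro x y hx hy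
        rw [map_add, lc.dL.mAS.rmul_add']; exact Submodule.add_mem _ hx hy
      · intro c x hx
        rw [map_smul, lc.dL.mAS.rmul_smul']; exact Submodule.smul_mem _ c hx
      · rintro v ⟨b₂, b₃, hv⟩
        refine Submodule.le_topologicalClosure _
          (Submodule.subset_span ⟨lk.iB b₂, lk.iB b₃ * star (lk.iX x₁), ?_⟩)
        rw [lc.dL.mAS.rmul_spec, lc.incl_eBS v b₂ b₃ hv, mul_assoc, lc.dL.tensOne_mul]
    have he : lc.dL.AS.tmul (star (lk.iX (X.rsmul x₁ b₁))) t
        = lc.dL.mAS.rmul (lc.eBS (dB.AS.tmul (star b₁) t))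
            (lc.dL.tensOne (star (lk.iX x₁))) := by
      apply lc.dL.mAS.incl_injective
      rw [lc.dL.mAS.rmul_spec, lc.eBS_tmul, lc.dL.tmul_tensOne, ← lk.mul_XB, star_mul,
        map_star]
    rw [he]
    exact hall _
end
end
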